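/- arXiv:2210.01899 — 9 statements merged into one kernel-verified Lean document; each statement's English description precedes it below -/
import Mathlib

section
/- Let λ, μ, ω, h ∈ ℝ with μ > 0, λ + 2μ > 0, h > 0, and let k, p, q ∈ ℂ satisfy p² = ω²/(λ+2μ) − k², q² = ω²/μ − k², and the symmetric Rayleigh–Lamb equation in product form: (q²−k²)² sin(qh) cos(ph) + 4k²pq sin(ph) cos(qh) = 0. Define the functions on [−h,h]: u(z) = ik(q²−k²) sin(qh) cos(pz) − 2ikpq sin(ph) cos(qz); t(z) = 2ikμ(q²−k²)p(−sin(qh) sin(pz) + sin(ph) sin(qz)); (−s)(z) = (q²−k²)((λ+2μ)k² + λp²) sin(qh) cos(pz) − 4μpqk² sin(ph) cos(qz); v(z) = −p(q²−k²) sin(qh) sin(pz) − 2k²p sin(ph) sin(qz). Then X = (u, t) and Y = (−s, v) satisfy F(Y)(z) = ik·X(z) and G(X)(z) = ik·Y(z) for all z ∈ [−h,h], together with the boundary conditions B₁(X)(±h) = 0 and B₂(Y)(±h) = 0; that is, (X, Y) is a (symmetric) Lamb mode with wavenumber k. -/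
/-!
Each of `cos (p z)` and `cos (q z)` carries its own plane-wave solution of `F(Y) = ikX`,
`G(X) = ikY`: the longitudinal one exists because `ω² = (λ + 2μ)(p² + k²)`, the transverse
one because `ω² = μ(q² + k²)`, and the profiles are a superposition of the two with amplitudes
`(q² - k²) sin (qh)` and `p sin (ph)`. These amplitudes make the shear stress `t` vanish at `±h`,
and with `(λ + 2μ)(p² + k²) = μ(q² + k²)` the normal stress at `±h` is `-μ` times the
Rayleigh–Lamb expression.
-/

open Complex Set

namespace LambMode

section Profiles

variable (κ₁ κ₂ a₁ a₂ : ℂ)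

noncomputable def cosPair (z : ℝ) : ℂ := a₁ * cos (κ₁ * z) + a₂ * cos (κ₂ * z)

noncomputable def sinPair (z : ℝ) : ℂ := a₁ * sin (κ₁ * z) + a₂ * sin (κ₂ * z)

lemma hasDerivAt_cos_const_mul (c : ℂ) (z : ℝ) :
    HasDerivAt (fun x : ℝ => cos (c * x)) (-(c * sin (c * z))) z := by
  simpa [mul_comm] using ((hasDerivAt_id (z : ℂ)).const_mul c).ccos.comp_ofReal

lemma hasDerivAt_sin_const_mul (c : ℂ) (z : ℝ) :
    HasDerivAt (fun x : ℝ => sin (c * x)) (c * cos (c * z)) z := by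
  simpa [mul_comm] using ((hasDerivAt_id (z : ℂ)).const_mul c).csin.comp_ofReal

lemma deriv_cosPair : deriv (cosPair κ₁ κ₂ a₁ a₂) = sinPair κ₁ κ₂ (-(κ₁ * a₁)) (-(κ₂ * a₂)) := by
  funext z
  refine ((((hasDerivAt_cos_const_mul κ₁ z).const_mul a₁).add
    ((hasDerivAt_cos_const_mul κ₂ z).const_mul a₂)).deriv).trans ?_
  simp only [sinPair]
  ring

lemma deriv_sinPair : deriv (sinPair κ₁ κ₂ a₁ a₂) = cosPair κ₁ κ₂ (κ₁ * a₁) (κ₂ * a₂) := by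
  funext z
  refine ((((hasDerivAt_sin_const_mul κ₁ z).const_mul a₁).add
    ((hasDerivAt_sin_const_mul κ₂ z).const_mul a₂)).deriv).trans ?_
  simp only [cosPair]
  ring

lemma sinPair_neg (z : ℝ) : sinPair κ₁ κ₂ a₁ a₂ (-z) = -sinPair κ₁ κ₂ a₁ a₂ z := by
  simp only [sinPair, ofReal_neg, mul_neg, sin_neg]
  ring

end Profiles

variable {lam mu om k : ℂ}

def SolvesLambSystem (lam mu om k : ℂ) (u t ms v : ℝ → ℂ) : Prop :=
  ∀ z : ℝ,
    (-(ms z) / (lam + 2 * mu) - (lam / (lam + 2 * mu)) * deriv v z = I * k * u z)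
    ∧ ((lam / (lam + 2 * mu)) * deriv ms z - om ^ 2 * v z
        - ((4 * mu * (lam + mu)) / (lam + 2 * mu)) * deriv (deriv v) z = I * k * t z)
    ∧ (om ^ 2 * u z + deriv t z = I * k * ms z)
    ∧ (-(deriv u z) + t z / mu = I * k * v z)

/-- The plane wave `u = a cos (κz)`, `t = b sin (κz)`, `-s = c cos (κz)`, `v = d sin (κz)`
solves `F(Y) = ikX`, `G(X) = ikY`. -/
structure IsWaveAmplitude (lam mu om k κ a b c d : ℂ) : Prop where
  f₁ : -c / (lam + 2 * mu) - (lam / (lam + 2 * mu)) * (κ * d) = I * k * a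
  f₂ : (lam / (lam + 2 * mu)) * (-(κ * c)) - om ^ 2 * d
      - ((4 * mu * (lam + mu)) / (lam + 2 * mu)) * (-(κ * (κ * d))) = I * k * b
  g₁ : om ^ 2 * a + κ * b = I * k * c
  g₂ : κ * a + b / mu = I * k * d

theorem solvesLambSystem_of_isWaveAmplitude {κ₁ κ₂ a₁ a₂ b₁ b₂ c₁ c₂ d₁ d₂ : ℂ}
    (h₁ : IsWaveAmplitude lam mu om k κ₁ a₁ b₁ c₁ d₁)
    (h₂ : IsWaveAmplitude lam mu om k κ₂ a₂ b₂ c₂ d₂) :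
    SolvesLambSystem lam mu om k (cosPair κ₁ κ₂ a₁ a₂) (sinPair κ₁ κ₂ b₁ b₂)
      (cosPair κ₁ κ₂ c₁ c₂) (sinPair κ₁ κ₂ d₁ d₂) := by
  intro z
  simp only [deriv_cosPair, deriv_sinPair, cosPair, sinPair]
  refine ⟨?_, ?_, ?_, ?_⟩
  · linear_combination cos (κ₁ * z) * h₁.f₁ + cos (κ₂ * z) * h₂.f₁
  · linear_combination sin (κ₁ * z) * h₁.f₂ + sin (κ₂ * z) * h₂.f₂
  · linear_combination cos (κ₁ * z) * h₁.g₁ + cos (κ₂ * z) * h₂.g₁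
  · linear_combination sin (κ₁ * z) * h₁.g₂ + sin (κ₂ * z) * h₂.g₂

theorem isWaveAmplitude_longitudinal {p : ℂ} (hL : lam + 2 * mu ≠ 0) (hM : mu ≠ 0)
    (hω : om ^ 2 = (lam + 2 * mu) * (p ^ 2 + k ^ 2)) (α : ℂ) :
    IsWaveAmplitude lam mu om k p (α * (I * k)) (α * (-2 * I * k * mu * p))
      (α * ((lam + 2 * mu) * k ^ 2 + lam * p ^ 2)) (α * -p) where
  f₁ := by linear_combination (norm := (field_simp; ring)) (-α * k ^ 2) * I_sq
  f₂ := by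
    rw [hω]; linear_combination (norm := (field_simp; ring)) (2 * mu * k ^ 2 * p * α) * I_sq
  g₁ := by rw [hω]; ring
  g₂ := by field_simp; ring

theorem isWaveAmplitude_transverse {q : ℂ} (hL : lam + 2 * mu ≠ 0) (hM : mu ≠ 0)
    (hω : om ^ 2 = mu * (q ^ 2 + k ^ 2)) (β : ℂ) :
    IsWaveAmplitude lam mu om k q (β * (-2 * I * k * q)) (β * (2 * I * k * mu * (q ^ 2 - k ^ 2)))
      (β * (-4 * mu * q * k ^ 2)) (β * (-2 * k ^ 2)) where
  f₁ := by
    rw [div_mul_eq_mul_div, div_sub_div_same, div_eq_iff hL]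
    linear_combination (2 * q * k ^ 2 * β * (lam + 2 * mu)) * I_sq
  f₂ := by
    rw [hω]
    linear_combination (norm := (field_simp; ring)) (-2 * mu * k ^ 2 * β * (q ^ 2 - k ^ 2)) * I_sq
  g₁ := by rw [hω]; ring
  g₂ := by field_simp; ring

theorem normalStress_superposition {p q : ℂ} (hL : lam + 2 * mu ≠ 0)
    (hpq : (lam + 2 * mu) * (p ^ 2 + k ^ 2) = mu * (q ^ 2 + k ^ 2)) (α β : ℂ) (z : ℝ) :
    -(lam / (lam + 2 * mu)) * cosPair p q (α * ((lam + 2 * mu) * k ^ 2 + lam * p ^ 2))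
        (β * (-4 * mu * q * k ^ 2)) z
      + ((4 * mu * (lam + mu)) / (lam + 2 * mu)) * deriv (sinPair p q (α * -p) (β * (-2 * k ^ 2))) z
      = -mu * ((q ^ 2 - k ^ 2) * α * cos (p * z) + 4 * k ^ 2 * q * β * cos (q * z)) := by
  rw [deriv_sinPair]
  simp only [cosPair]
  field_simp
  linear_combination (-(lam + 2 * mu) * α * cos (p * z)) * hpq

end LambMode

open LambMode

theorem symmetric_lamb_mode_general
    (lam mu om h0 : ℝ) (hmu : 0 < mu) (hlm : 0 < lam + 2*mu)
    (k p q : ℂ)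
    (hp : p^2 = (om:ℂ)^2/((lam:ℂ)+2*(mu:ℂ)) - k^2)
    (hq : q^2 = (om:ℂ)^2/(mu:ℂ) - k^2)
    (hRL : (q^2-k^2)^2 * Complex.sin (q*h0) * Complex.cos (p*h0)
        + 4*k^2*p*q*Complex.sin (p*h0) * Complex.cos (q*h0) = 0)
    (u t ms v : ℝ → ℂ)
    (hu : u = fun z : ℝ => Complex.I*k*(q^2-k^2)*Complex.sin (q*h0)*Complex.cos (p*z)
        - 2*Complex.I*k*p*q*Complex.sin (p*h0)*Complex.cos (q*z))
    (ht : t = fun z : ℝ => 2*Complex.I*k*(mu:ℂ)*(q^2-k^2)*p*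
        (-Complex.sin (q*h0)*Complex.sin (p*z) + Complex.sin (p*h0)*Complex.sin (q*z)))
    (hms : ms = fun z : ℝ => (q^2-k^2)*(((lam:ℂ)+2*(mu:ℂ))*k^2 + (lam:ℂ)*p^2)*
        Complex.sin (q*h0)*Complex.cos (p*z)
        - 4*(mu:ℂ)*p*q*k^2*Complex.sin (p*h0)*Complex.cos (q*z))
    (hv : v = fun z : ℝ => -p*(q^2-k^2)*Complex.sin (q*h0)*Complex.sin (p*z)
        - 2*k^2*p*Complex.sin (p*h0)*Complex.sin (q*z)) :
    (∀ z ∈ Set.Icc (-h0) h0,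
        (-(ms z)/((lam:ℂ)+2*(mu:ℂ)) - ((lam:ℂ)/((lam:ℂ)+2*(mu:ℂ))) * deriv v z
            = Complex.I*k*u z)
        ∧ (((lam:ℂ)/((lam:ℂ)+2*(mu:ℂ))) * deriv ms z - (om:ℂ)^2 * v z
            - ((4*(mu:ℂ)*((lam:ℂ)+(mu:ℂ)))/((lam:ℂ)+2*(mu:ℂ))) * deriv (deriv v) z
            = Complex.I*k*t z)
        ∧ ((om:ℂ)^2 * u z + deriv t z = Complex.I*k*ms z)
        ∧ (-(deriv u z) + t z/(mu:ℂ) = Complex.I*k*v z))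
    ∧ (t h0 = 0 ∧ t (-h0) = 0)
    ∧ (-((lam:ℂ)/((lam:ℂ)+2*(mu:ℂ))) * ms h0
          + ((4*(mu:ℂ)*((lam:ℂ)+(mu:ℂ)))/((lam:ℂ)+2*(mu:ℂ))) * deriv v h0 = 0
       ∧ -((lam:ℂ)/((lam:ℂ)+2*(mu:ℂ))) * ms (-h0)
          + ((4*(mu:ℂ)*((lam:ℂ)+(mu:ℂ)))/((lam:ℂ)+2*(mu:ℂ))) * deriv v (-h0) = 0) := by
  have hL : (lam : ℂ) + 2 * mu ≠ 0 := by exact_mod_cast hlm.ne'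
  have hM : (mu : ℂ) ≠ 0 := by exact_mod_cast hmu.ne'
  have hωp : (om : ℂ) ^ 2 = (lam + 2 * mu) * (p ^ 2 + k ^ 2) := by rw [hp]; field_simp; ring
  have hωq : (om : ℂ) ^ 2 = mu * (q ^ 2 + k ^ 2) := by rw [hq]; field_simp; ring
  have ht₀ : t h0 = 0 := by simp only [ht]; ring
  set α := (q ^ 2 - k ^ 2) * sin (q * h0)
  set β := p * sin (p * h0)
  obtain rfl : u = cosPair p q (α * (I * k)) (β * (-2 * I * k * q)) := by
    rw [hu]; funext z; simp only [cosPair]; ring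
  obtain rfl :
      t = sinPair p q (α * (-2 * I * k * mu * p)) (β * (2 * I * k * mu * (q ^ 2 - k ^ 2))) := by
    rw [ht]; funext z; simp only [sinPair]; ring
  obtain rfl :
      ms = cosPair p q (α * ((lam + 2 * mu) * k ^ 2 + lam * p ^ 2)) (β * (-4 * mu * q * k ^ 2)) := by
    rw [hms]; funext z; simp only [cosPair]; ring
  obtain rfl : v = sinPair p q (α * -p) (β * (-2 * k ^ 2)) := by
    rw [hv]; funext z; simp only [sinPair]; ring
  have hsys := solvesLambSystem_of_isWaveAmplitude (isWaveAmplitude_longitudinal hL hM hωp α)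
    (isWaveAmplitude_transverse hL hM hωq β)
  have hstress := normalStress_superposition hL (hωp.symm.trans hωq) α β
  refine ⟨fun z _ => hsys z, ⟨ht₀, by rw [sinPair_neg, ht₀, neg_zero]⟩, ?_, ?_⟩
  · rw [hstress]; linear_combination -mu * hRL
  · rw [hstress]; simp only [ofReal_neg, mul_neg, cos_neg]; linear_combination -mu * hRL

/-- **Symmetric Lamb modes.** Given Lamé parameters `lam, mu`, frequency `om`, half-width
`h0 > 0`, and `k, p, q : ℂ` satisfying the dispersion relations and the symmetric
Rayleigh–Lamb equation in product form, the explicit trigonometric profiles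
`X = (u, t)`, `Y = (-s, v)` satisfy `F(Y) = ik·X`, `G(X) = ik·Y` on `[-h0, h0]` together
with the boundary conditions `B₁(X)(±h0) = B₂(Y)(±h0) = 0`; i.e. `(X, Y)` is a
(symmetric) Lamb mode with wavenumber `k`. -/
theorem symmetric_lamb_mode
    (lam mu om h0 : ℝ) (hmu : 0 < mu) (hlm : 0 < lam + 2*mu) (hh : 0 < h0)
    (k p q : ℂ)
    (hp : p^2 = (om:ℂ)^2/((lam:ℂ)+2*(mu:ℂ)) - k^2)
    (hq : q^2 = (om:ℂ)^2/(mu:ℂ) - k^2)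
    (hRL : (q^2-k^2)^2 * Complex.sin (q*h0) * Complex.cos (p*h0)
        + 4*k^2*p*q*Complex.sin (p*h0) * Complex.cos (q*h0) = 0)
    (u t ms v : ℝ → ℂ)
    (hu : u = fun z : ℝ => Complex.I*k*(q^2-k^2)*Complex.sin (q*h0)*Complex.cos (p*z)
        - 2*Complex.I*k*p*q*Complex.sin (p*h0)*Complex.cos (q*z))
    (ht : t = fun z : ℝ => 2*Complex.I*k*(mu:ℂ)*(q^2-k^2)*p*
        (-Complex.sin (q*h0)*Complex.sin (p*z) + Complex.sin (p*h0)*Complex.sin (q*z)))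
    (hms : ms = fun z : ℝ => (q^2-k^2)*(((lam:ℂ)+2*(mu:ℂ))*k^2 + (lam:ℂ)*p^2)*
        Complex.sin (q*h0)*Complex.cos (p*z)
        - 4*(mu:ℂ)*p*q*k^2*Complex.sin (p*h0)*Complex.cos (q*z))
    (hv : v = fun z : ℝ => -p*(q^2-k^2)*Complex.sin (q*h0)*Complex.sin (p*z)
        - 2*k^2*p*Complex.sin (p*h0)*Complex.sin (q*z)) :
    (∀ z ∈ Set.Icc (-h0) h0,
        (-(ms z)/((lam:ℂ)+2*(mu:ℂ)) - ((lam:ℂ)/((lam:ℂ)+2*(mu:ℂ))) * deriv v z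
            = Complex.I*k*u z)
        ∧ (((lam:ℂ)/((lam:ℂ)+2*(mu:ℂ))) * deriv ms z - (om:ℂ)^2 * v z
            - ((4*(mu:ℂ)*((lam:ℂ)+(mu:ℂ)))/((lam:ℂ)+2*(mu:ℂ))) * deriv (deriv v) z
            = Complex.I*k*t z)
        ∧ ((om:ℂ)^2 * u z + deriv t z = Complex.I*k*ms z)
        ∧ (-(deriv u z) + t z/(mu:ℂ) = Complex.I*k*v z))
    ∧ (t h0 = 0 ∧ t (-h0) = 0)
    ∧ (-((lam:ℂ)/((lam:ℂ)+2*(mu:ℂ))) * ms h0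
          + ((4*(mu:ℂ)*((lam:ℂ)+(mu:ℂ)))/((lam:ℂ)+2*(mu:ℂ))) * deriv v h0 = 0
       ∧ -((lam:ℂ)/((lam:ℂ)+2*(mu:ℂ))) * ms (-h0)
          + ((4*(mu:ℂ)*((lam:ℂ)+(mu:ℂ)))/((lam:ℂ)+2*(mu:ℂ))) * deriv v (-h0) = 0) :=
  symmetric_lamb_mode_general lam mu om h0 hmu hlm k p q hp hq hRL u t ms v hu ht hms hv
end

section
/- Let λ, μ, ω, h ∈ ℝ with μ > 0, λ + 2μ > 0, h > 0, and let k, p, q ∈ ℂ satisfy p² = ω²/(λ+2μ) − k², q² = ω²/μ − k², and the antisymmetric Rayleigh–Lamb equation in product form: (q²−k²)² cos(qh) sin(ph) + 4k²pq cos(ph) sin(qh) = 0. Define the functions on [−h,h]: u(z) = ik(q²−k²) cos(qh) sin(pz) − 2ikpq cos(ph) sin(qz); t(z) = 2ikμ(q²−k²)p(cos(qh) cos(pz) − cos(ph) cos(qz)); (−s)(z) = (q²−k²)((λ+2μ)k² + λp²) cos(qh) sin(pz) − 4μpqk² cos(ph) sin(qz); v(z) = p(q²−k²) cos(qh) cos(pz)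 + 2k²p cos(ph) cos(qz). Then X = (u, t) and Y = (−s, v) satisfy F(Y)(z) = ik·X(z) and G(X)(z) = ik·Y(z) for all z ∈ [−h,h], together with the boundary conditions B₁(X)(±h) = 0 and B₂(Y)(±h) = 0; that is, (X, Y) is an (antisymmetric) Lamb mode with wavenumber k. -/
/-!
All four profiles are combinations of `sin (p·), sin (q·)` or of `cos (p·), cos (q·)`, and
differentiation maps each kind of combination to the other. Each field equation therefore
becomes a polynomial identity in these trigonometric values, which holds modulo the dispersion
relations `ω² = (λ + 2μ)(p² + k²) = μ(q² + k²)`. At `z = h` the traction condition `B₂(Y) = 0`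
is the Rayleigh–Lamb equation, while `B₁(X) = t` vanishes there outright; at `z = -h` both
conditions follow by parity, `u` and `-s` being odd and `t` and `v` even.
-/

open Complex

lemma eq_mul_add_sq_of_sq_eq_div_sub {c w p k : ℂ} (hc : c ≠ 0) (h : p ^ 2 = w / c - k ^ 2) :
    w = c * (p ^ 2 + k ^ 2) := by
  rw [eq_sub_iff_add_eq, eq_div_iff hc] at h
  linear_combination -h

lemma hasDerivAt_sin_mul_ofReal (a : ℂ) (x : ℝ) :
    HasDerivAt (fun y : ℝ => sin (a * y)) (a * cos (a * x)) x := by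
  have h := (hasDerivAt_sin (a * x)).comp (x : ℂ) ((hasDerivAt_id (x : ℂ)).const_mul a)
  simp only [mul_one, Function.comp_def] at h
  exact (h.congr_deriv (mul_comm _ _)).comp_ofReal

lemma hasDerivAt_cos_mul_ofReal (a : ℂ) (x : ℝ) :
    HasDerivAt (fun y : ℝ => cos (a * y)) (-(a * sin (a * x))) x := by
  have h := (hasDerivAt_cos (a * x)).comp (x : ℂ) ((hasDerivAt_id (x : ℂ)).const_mul a)
  simp only [mul_one, Function.comp_def] at h
  exact (h.congr_deriv (by ring)).comp_ofReal

noncomputable section TrigCombinations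

variable (a b p q : ℂ)

def sinComb (x : ℝ) : ℂ := a * sin (p * x) + b * sin (q * x)

def cosComb (x : ℝ) : ℂ := a * cos (p * x) + b * cos (q * x)

lemma deriv_sinComb : deriv (sinComb a b p q) = cosComb (a * p) (b * q) p q :=
  funext fun x => HasDerivAt.deriv <|
    (((hasDerivAt_sin_mul_ofReal p x).const_mul a).add
      ((hasDerivAt_sin_mul_ofReal q x).const_mul b)).congr_deriv (by simp only [cosComb]; ring)

lemma deriv_cosComb : deriv (cosComb a b p q) = sinComb (-(a * p)) (-(b * q)) p q :=
  funext fun x => HasDerivAt.deriv <|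
    (((hasDerivAt_cos_mul_ofReal p x).const_mul a).add
      ((hasDerivAt_cos_mul_ofReal q x).const_mul b)).congr_deriv (by simp only [sinComb]; ring)

lemma sinComb_neg (x : ℝ) : sinComb a b p q (-x) = -sinComb a b p q x := by
  simp only [sinComb, ofReal_neg, mul_neg, sin_neg]; ring

lemma cosComb_neg (x : ℝ) : cosComb a b p q (-x) = cosComb a b p q x := by
  simp only [cosComb, ofReal_neg, mul_neg, cos_neg]

end TrigCombinations

noncomputable section

namespace AntisymmetricLamb

variable (lam mu k p q : ℂ) (h0 : ℝ)

def u : ℝ → ℂ :=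
  sinComb (I * k * (q ^ 2 - k ^ 2) * cos (q * h0)) (-(2 * I * k * p * q * cos (p * h0))) p q

def t : ℝ → ℂ :=
  cosComb (2 * I * k * mu * (q ^ 2 - k ^ 2) * p * cos (q * h0))
    (-(2 * I * k * mu * (q ^ 2 - k ^ 2) * p * cos (p * h0))) p q

def ms : ℝ → ℂ :=
  sinComb ((q ^ 2 - k ^ 2) * ((lam + 2 * mu) * k ^ 2 + lam * p ^ 2) * cos (q * h0))
    (-(4 * mu * p * q * k ^ 2 * cos (p * h0))) p q

def v : ℝ → ℂ :=
  cosComb (p * (q ^ 2 - k ^ 2) * cos (q * h0)) (2 * k ^ 2 * p * cos (p * h0)) p q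

variable {lam mu w k p q : ℂ} {h0 : ℝ}

lemma F₁_eq (hL : lam + 2 * mu ≠ 0) (z : ℝ) :
    -(ms lam mu k p q h0 z) / (lam + 2 * mu) - (lam / (lam + 2 * mu)) * deriv (v k p q h0) z
      = I * k * u k p q h0 z := by
  rw [v, deriv_cosComb]
  field_simp
  simp only [u, ms, sinComb]
  linear_combination (-(lam + 2 * mu) * k ^ 2 * ((q ^ 2 - k ^ 2) * cos (q * h0) * sin (p * z)
    - 2 * p * q * cos (p * h0) * sin (q * z))) * I_sq

lemma F₂_eq (hL : lam + 2 * mu ≠ 0) (hωp : w = (lam + 2 * mu) * (p ^ 2 + k ^ 2))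
    (hωq : w = mu * (q ^ 2 + k ^ 2)) (z : ℝ) :
    (lam / (lam + 2 * mu)) * deriv (ms lam mu k p q h0) z - w * v k p q h0 z
      - (4 * mu * (lam + mu) / (lam + 2 * mu)) * deriv (deriv (v k p q h0)) z
      = I * k * t mu k p q h0 z := by
  rw [ms, deriv_sinComb, v, deriv_cosComb, deriv_sinComb]
  field_simp
  simp only [t, cosComb]
  linear_combination (-(lam + 2 * mu) * p * (q ^ 2 - k ^ 2) * cos (q * h0) * cos (p * z)) * hωp
    - (lam + 2 * mu) * 2 * k ^ 2 * p * cos (p * h0) * cos (q * z) * hωq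
    - (2 * k ^ 2 * mu * (q ^ 2 - k ^ 2) * p * (lam + 2 * mu)
      * (cos (q * h0) * cos (p * z) - cos (p * h0) * cos (q * z))) * I_sq

lemma G₁_eq (hωp : w = (lam + 2 * mu) * (p ^ 2 + k ^ 2)) (hωq : w = mu * (q ^ 2 + k ^ 2))
    (z : ℝ) :
    w * u k p q h0 z + deriv (t mu k p q h0) z = I * k * ms lam mu k p q h0 z := by
  rw [t, deriv_cosComb]
  simp only [u, ms, sinComb]
  linear_combination I * k * (q ^ 2 - k ^ 2) * cos (q * h0) * sin (p * z) * hωp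
    - 2 * I * k * p * q * cos (p * h0) * sin (q * z) * hωq

lemma G₂_eq (hM : mu ≠ 0) (z : ℝ) :
    -(deriv (u k p q h0) z) + t mu k p q h0 z / mu = I * k * v k p q h0 z := by
  rw [u, deriv_sinComb]
  simp only [t, v, cosComb]
  field_simp
  ring

lemma t_self_eq_zero : t mu k p q h0 h0 = 0 := by
  simp only [t, cosComb]
  ring

lemma B₂_self_eq_zero (hωp : w = (lam + 2 * mu) * (p ^ 2 + k ^ 2))
    (hωq : w = mu * (q ^ 2 + k ^ 2))
    (hRL : (q ^ 2 - k ^ 2) ^ 2 * cos (q * h0) * sin (p * h0)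
      + 4 * k ^ 2 * p * q * cos (p * h0) * sin (q * h0) = 0) :
    -(lam / (lam + 2 * mu)) * ms lam mu k p q h0 h0
      + (4 * mu * (lam + mu) / (lam + 2 * mu)) * deriv (v k p q h0) h0 = 0 := by
  suffices h : -lam * ms lam mu k p q h0 h0 + 4 * mu * (lam + mu) * deriv (v k p q h0) h0 = 0 by
    linear_combination h / (lam + 2 * mu)
  rw [v, deriv_cosComb]
  simp only [ms, sinComb]
  linear_combination (lam + 2 * mu) * (q ^ 2 - k ^ 2) * cos (q * h0) * sin (p * h0) * (hωp - hωq)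
    - mu * (lam + 2 * mu) * hRL

lemma B₂_neg_self_eq_zero (hωp : w = (lam + 2 * mu) * (p ^ 2 + k ^ 2))
    (hωq : w = mu * (q ^ 2 + k ^ 2))
    (hRL : (q ^ 2 - k ^ 2) ^ 2 * cos (q * h0) * sin (p * h0)
      + 4 * k ^ 2 * p * q * cos (p * h0) * sin (q * h0) = 0) :
    -(lam / (lam + 2 * mu)) * ms lam mu k p q h0 (-h0)
      + (4 * mu * (lam + mu) / (lam + 2 * mu)) * deriv (v k p q h0) (-h0) = 0 := by
  have h := B₂_self_eq_zero hωp hωq hRL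
  rw [ms, v, deriv_cosComb] at h ⊢
  rw [sinComb_neg, sinComb_neg]
  linear_combination -h

end AntisymmetricLamb

end

theorem antisymmetric_lamb_mode_general
    (lam mu om h0 : ℝ) (hmu : 0 < mu) (hlm : 0 < lam + 2*mu)
    (k p q : ℂ)
    (hp : p^2 = (om:ℂ)^2/((lam:ℂ)+2*(mu:ℂ)) - k^2)
    (hq : q^2 = (om:ℂ)^2/(mu:ℂ) - k^2)
    (hRL : (q^2-k^2)^2 * Complex.cos (q*h0) * Complex.sin (p*h0)
        + 4*k^2*p*q*Complex.cos (p*h0) * Complex.sin (q*h0) = 0)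
    (u t ms v : ℝ → ℂ)
    (hu : u = fun z : ℝ => Complex.I*k*(q^2-k^2)*Complex.cos (q*h0)*Complex.sin (p*z)
        - 2*Complex.I*k*p*q*Complex.cos (p*h0)*Complex.sin (q*z))
    (ht : t = fun z : ℝ => 2*Complex.I*k*(mu:ℂ)*(q^2-k^2)*p*
        (Complex.cos (q*h0)*Complex.cos (p*z) - Complex.cos (p*h0)*Complex.cos (q*z)))
    (hms : ms = fun z : ℝ => (q^2-k^2)*(((lam:ℂ)+2*(mu:ℂ))*k^2 + (lam:ℂ)*p^2)*
        Complex.cos (q*h0)*Complex.sin (p*z)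
        - 4*(mu:ℂ)*p*q*k^2*Complex.cos (p*h0)*Complex.sin (q*z))
    (hv : v = fun z : ℝ => p*(q^2-k^2)*Complex.cos (q*h0)*Complex.cos (p*z)
        + 2*k^2*p*Complex.cos (p*h0)*Complex.cos (q*z)) :
    (∀ z ∈ Set.Icc (-h0) h0,
        (-(ms z)/((lam:ℂ)+2*(mu:ℂ)) - ((lam:ℂ)/((lam:ℂ)+2*(mu:ℂ))) * deriv v z
            = Complex.I*k*u z)
        ∧ (((lam:ℂ)/((lam:ℂ)+2*(mu:ℂ))) * deriv ms z - (om:ℂ)^2 * v z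
            - ((4*(mu:ℂ)*((lam:ℂ)+(mu:ℂ)))/((lam:ℂ)+2*(mu:ℂ))) * deriv (deriv v) z
            = Complex.I*k*t z)
        ∧ ((om:ℂ)^2 * u z + deriv t z = Complex.I*k*ms z)
        ∧ (-(deriv u z) + t z/(mu:ℂ) = Complex.I*k*v z))
    ∧ (t h0 = 0 ∧ t (-h0) = 0)
    ∧ (-((lam:ℂ)/((lam:ℂ)+2*(mu:ℂ))) * ms h0
          + ((4*(mu:ℂ)*((lam:ℂ)+(mu:ℂ)))/((lam:ℂ)+2*(mu:ℂ))) * deriv v h0 = 0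
       ∧ -((lam:ℂ)/((lam:ℂ)+2*(mu:ℂ))) * ms (-h0)
          + ((4*(mu:ℂ)*((lam:ℂ)+(mu:ℂ)))/((lam:ℂ)+2*(mu:ℂ))) * deriv v (-h0) = 0) := by
  have hL : (lam : ℂ) + 2 * mu ≠ 0 := by exact_mod_cast hlm.ne'
  have hM : (mu : ℂ) ≠ 0 := by exact_mod_cast hmu.ne'
  have hωp := eq_mul_add_sq_of_sq_eq_div_sub hL hp
  have hωq := eq_mul_add_sq_of_sq_eq_div_sub hM hq
  obtain rfl : u = AntisymmetricLamb.u k p q h0 :=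
    hu.trans (funext fun z => by unfold AntisymmetricLamb.u sinComb; ring)
  obtain rfl : t = AntisymmetricLamb.t mu k p q h0 :=
    ht.trans (funext fun z => by unfold AntisymmetricLamb.t cosComb; ring)
  obtain rfl : ms = AntisymmetricLamb.ms lam mu k p q h0 :=
    hms.trans (funext fun z => by unfold AntisymmetricLamb.ms sinComb; ring)
  obtain rfl : v = AntisymmetricLamb.v k p q h0 :=
    hv.trans (funext fun z => by unfold AntisymmetricLamb.v cosComb; ring)
  open AntisymmetricLamb in
  exact ⟨fun z _ => ⟨F₁_eq hL z, F₂_eq hL hωp hωq z, G₁_eq hωp hωq z, G₂_eq hM z⟩,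
    ⟨t_self_eq_zero, (cosComb_neg _ _ _ _ h0).trans t_self_eq_zero⟩,
    B₂_self_eq_zero hωp hωq hRL, B₂_neg_self_eq_zero hωp hωq hRL⟩

/-- **Antisymmetric Lamb modes.** Given Lamé parameters `lam, mu`, frequency `om`, half-width
`h0 > 0`, and `k, p, q : ℂ` satisfying the dispersion relations and the antisymmetric
Rayleigh–Lamb equation in product form, the explicit trigonometric profiles
`X = (u, t)`, `Y = (-s, v)` satisfy `F(Y) = ik·X`, `G(X) = ik·Y` on `[-h0, h0]` together
with the boundary conditions `B₁(X)(±h0) = B₂(Y)(±h0) = 0`; i.e. `(X, Y)` is an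
(antisymmetric) Lamb mode with wavenumber `k`. -/
theorem antisymmetric_lamb_mode
    (lam mu om h0 : ℝ) (hmu : 0 < mu) (hlm : 0 < lam + 2*mu) (hh : 0 < h0)
    (k p q : ℂ)
    (hp : p^2 = (om:ℂ)^2/((lam:ℂ)+2*(mu:ℂ)) - k^2)
    (hq : q^2 = (om:ℂ)^2/(mu:ℂ) - k^2)
    (hRL : (q^2-k^2)^2 * Complex.cos (q*h0) * Complex.sin (p*h0)
        + 4*k^2*p*q*Complex.cos (p*h0) * Complex.sin (q*h0) = 0)
    (u t ms v : ℝ → ℂ)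
    (hu : u = fun z : ℝ => Complex.I*k*(q^2-k^2)*Complex.cos (q*h0)*Complex.sin (p*z)
        - 2*Complex.I*k*p*q*Complex.cos (p*h0)*Complex.sin (q*z))
    (ht : t = fun z : ℝ => 2*Complex.I*k*(mu:ℂ)*(q^2-k^2)*p*
        (Complex.cos (q*h0)*Complex.cos (p*z) - Complex.cos (p*h0)*Complex.cos (q*z)))
    (hms : ms = fun z : ℝ => (q^2-k^2)*(((lam:ℂ)+2*(mu:ℂ))*k^2 + (lam:ℂ)*p^2)*
        Complex.cos (q*h0)*Complex.sin (p*z)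
        - 4*(mu:ℂ)*p*q*k^2*Complex.cos (p*h0)*Complex.sin (q*z))
    (hv : v = fun z : ℝ => p*(q^2-k^2)*Complex.cos (q*h0)*Complex.cos (p*z)
        + 2*k^2*p*Complex.cos (p*h0)*Complex.cos (q*z)) :
    (∀ z ∈ Set.Icc (-h0) h0,
        (-(ms z)/((lam:ℂ)+2*(mu:ℂ)) - ((lam:ℂ)/((lam:ℂ)+2*(mu:ℂ))) * deriv v z
            = Complex.I*k*u z)
        ∧ (((lam:ℂ)/((lam:ℂ)+2*(mu:ℂ))) * deriv ms z - (om:ℂ)^2 * v z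
            - ((4*(mu:ℂ)*((lam:ℂ)+(mu:ℂ)))/((lam:ℂ)+2*(mu:ℂ))) * deriv (deriv v) z
            = Complex.I*k*t z)
        ∧ ((om:ℂ)^2 * u z + deriv t z = Complex.I*k*ms z)
        ∧ (-(deriv u z) + t z/(mu:ℂ) = Complex.I*k*v z))
    ∧ (t h0 = 0 ∧ t (-h0) = 0)
    ∧ (-((lam:ℂ)/((lam:ℂ)+2*(mu:ℂ))) * ms h0
          + ((4*(mu:ℂ)*((lam:ℂ)+(mu:ℂ)))/((lam:ℂ)+2*(mu:ℂ))) * deriv v h0 = 0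
       ∧ -((lam:ℂ)/((lam:ℂ)+2*(mu:ℂ))) * ms (-h0)
          + ((4*(mu:ℂ)*((lam:ℂ)+(mu:ℂ)))/((lam:ℂ)+2*(mu:ℂ))) * deriv v (-h0) = 0) :=
  antisymmetric_lamb_mode_general lam mu om h0 hmu hlm k p q hp hq hRL u t ms v hu ht hms hv
end

section
/- Let λ, μ, ω, h ∈ ℝ with μ > 0, λ + 2μ > 0, ω > 0, h > 0. Then the set of wavenumbers k ∈ ℂ associated to Lamb modes, namely the set of k ∈ ℂ for which there exist p, q ∈ ℂ with p² = ω²/(λ+2μ) − k², q² = ω²/μ − k², and ( (q²−k²)² sin(qh) cos(ph) + 4k²pq sin(ph) cos(qh) ) · ( (q²−k²)² cos(qh) sin(ph) + 4k²pq cos(ph) sin(qh) ) = 0, is countable. -/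
/-!
Since `cos` and `z ↦ sin z / z` are even entire functions, `cos z = cosSqrt (z ^ 2)` and
`sin z = z * sincSqrt (z ^ 2)` with `cosSqrt`, `sincSqrt` entire. With `a = ω²/(λ+2μ)`,
`b = ω²/μ`, `u = k²`, `p² = a - u` and `q² = b - u`, the symmetric and antisymmetric
Rayleigh–Lamb expressions become `q h G(u)` and `p h H(u)` for entire functions `G`, `H`
(`symmRayleighLamb`, `antisymmRayleighLamb`) that no longer involve the square roots. So every
Lamb wavenumber has `k² ∈ {a, b}` or `G(k²) H(k²) = 0`, and it remains to see that `G` and `H`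
are not identically zero, since a nonzero entire function has a discrete, hence countable, zero
set. If `a = b`, then `G(a) = H(a) = b² ≠ 0`. Otherwise, at `u = a - (nπ/h)²` we have
`sin (p h) = 0`, which kills one term of each of `G` and `H`; the other term vanishes only if
`h²(b - a) + (nπ)²` is some `(mπ)²`, which the growing gaps between squares exclude for
large `n`.
-/

open Complex Set Filter FormalMultilinearSeries
open scoped Nat

section OfScalars

variable {𝕜 E : Type*} [NontriviallyNormedField 𝕜] [NormedRing E] [NormedAlgebra 𝕜 E]
  {c : ℕ → 𝕜}

theorem FormalMultilinearSeries.ofScalars_radius_eq_top_of_norm_le_inv_factorial [NormOneClass E]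
    (hc : ∀ n, ‖c n‖ ≤ (n ! : ℝ)⁻¹) : (ofScalars E c).radius = ⊤ := by
  refine radius_eq_top_of_summable_norm _ fun r => ?_
  refine .of_nonneg_of_le (fun n => by positivity) (fun n => ?_) (Real.summable_pow_div_factorial r)
  rw [ofScalars_norm, div_eq_inv_mul]
  exact mul_le_mul_of_nonneg_right (hc n) (pow_nonneg r.coe_nonneg n)

theorem FormalMultilinearSeries.analyticAt_ofScalarsSum [CompleteSpace E]
    (hc : (ofScalars E c).radius = ⊤) (z : E) : AnalyticAt 𝕜 (ofScalarsSum c) z :=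
  ((ofScalars E c).hasFPowerSeriesOnBall (hc ▸ ENNReal.zero_lt_top)).analyticAt_of_mem
    (by simp [hc])

end OfScalars

theorem AnalyticOnNhd.countable_setOf_eq_zero {E : Type*} [NormedAddCommGroup E]
    [NormedSpace ℂ E] {f : ℂ → E} (hf : AnalyticOnNhd ℂ f univ) (hne : ∃ z, f z ≠ 0) :
    {z | f z = 0}.Countable := by
  obtain ⟨z₀, hz₀⟩ := hne
  rcases hf.eqOn_zero_or_eventually_ne_zero_of_preconnected isPreconnected_univ with h | h
  · exact absurd (h (mem_univ z₀)) hz₀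
  · simpa using (HereditarilyLindelofSpace.isLindelof _).countable_of_isDiscrete
      (isDiscrete_of_codiscreteWithin (s := {z | f z = 0}) h)

theorem AnalyticOnNhd.countable_setOf_pow_eq_zero {f : ℂ → ℂ} (hf : AnalyticOnNhd ℂ f univ)
    (hne : ∃ u, f u ≠ 0) {n : ℕ} (hn : 0 < n) : {k : ℂ | f (k ^ n) = 0}.Countable := by
  obtain ⟨u, hu⟩ := hne
  obtain ⟨k, rfl⟩ := IsAlgClosed.exists_pow_nat_eq u hn
  exact (hf.comp (analyticOnNhd_id.pow n) (mapsTo_univ _ _)).countable_setOf_eq_zero ⟨k, hu⟩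

noncomputable def cosSqrt : ℂ → ℂ := ofScalarsSum fun n => (-1 : ℂ) ^ n / (2 * n)!

noncomputable def sincSqrt : ℂ → ℂ := ofScalarsSum fun n => (-1 : ℂ) ^ n / (2 * n + 1)!

@[fun_prop]
theorem analyticAt_cosSqrt (z : ℂ) : AnalyticAt ℂ cosSqrt z :=
  analyticAt_ofScalarsSum (z := z) <| ofScalars_radius_eq_top_of_norm_le_inv_factorial fun n => by
    simpa using inv_anti₀ (by positivity) (mod_cast Nat.factorial_le (by omega : n ≤ 2 * n))

@[fun_prop]
theorem analyticAt_sincSqrt (z : ℂ) : AnalyticAt ℂ sincSqrt z :=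
  analyticAt_ofScalarsSum (z := z) <| ofScalars_radius_eq_top_of_norm_le_inv_factorial fun n => by
    simpa using inv_anti₀ (by positivity) (mod_cast Nat.factorial_le (by omega : n ≤ 2 * n + 1))

theorem cosSqrt_sq (z : ℂ) : cosSqrt (z ^ 2) = cos z := by
  rw [cosSqrt, ofScalars_sum_eq, ← (hasSum_cos z).tsum_eq]
  refine tsum_congr fun n => ?_
  rw [smul_eq_mul, ← pow_mul]
  ring

theorem mul_sincSqrt_sq (z : ℂ) : z * sincSqrt (z ^ 2) = sin z := by
  rw [sincSqrt, ofScalars_sum_eq, ← tsum_mul_left, ← (hasSum_sin z).tsum_eq]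
  refine tsum_congr fun n => ?_
  rw [smul_eq_mul, ← pow_mul, pow_succ z (2 * n)]
  ring

@[simp] theorem cosSqrt_zero : cosSqrt 0 = 1 := by
  simpa using cosSqrt_sq 0

@[simp] theorem sincSqrt_zero : sincSqrt 0 = 1 := by
  simp [sincSqrt, ofScalarsSum_zero]

theorem exists_int_eq_sq_mul_pi_of_sincSqrt_eq_zero {w : ℂ} (hw : sincSqrt w = 0) :
    ∃ m : ℤ, w = (m * Real.pi) ^ 2 := by
  obtain ⟨z, rfl⟩ := IsAlgClosed.exists_pow_nat_eq w two_pos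
  obtain ⟨m, rfl⟩ := sin_eq_zero_iff.1 (by rw [← mul_sincSqrt_sq, hw, mul_zero])
  exact ⟨m, rfl⟩

theorem Int.natCast_le_abs_sq_sub_sq {m : ℤ} {n : ℕ} (h : m ^ 2 ≠ n ^ 2) :
    (n : ℤ) ≤ |m ^ 2 - n ^ 2| := by
  have hgap : 1 ≤ |(|m| - n)| :=
    Int.one_le_abs (sub_ne_zero.2 fun he => h (by rw [← sq_abs, he]))
  calc (n : ℤ) ≤ 1 * (|m| + n) := by linarith [abs_nonneg m]
    _ ≤ |(|m| - n)| * (|m| + n) := by gcongr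
    _ = |m ^ 2 - n ^ 2| := by
      rw [← abs_of_nonneg (by positivity : (0 : ℤ) ≤ |m| + n), ← abs_mul, ← sq_abs m]
      ring_nf

theorem sincSqrt_add_sq_ne_zero {c : ℝ} {n : ℕ} (hc : c ≠ 0) (hn : |c| < n * Real.pi ^ 2) :
    sincSqrt (c + (n * Real.pi) ^ 2) ≠ 0 := by
  intro h
  obtain ⟨m, hm⟩ := exists_int_eq_sq_mul_pi_of_sincSqrt_eq_zero h
  have hcm : c = ((m ^ 2 - n ^ 2 : ℤ) : ℝ) * Real.pi ^ 2 := by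
    have : c + (n * Real.pi) ^ 2 = (m * Real.pi) ^ 2 := mod_cast hm
    push_cast; linear_combination this
  have hmn : m ^ 2 ≠ n ^ 2 := fun he => hc (by simp [hcm, he])
  have : (n : ℝ) ≤ |((m ^ 2 - n ^ 2 : ℤ) : ℝ)| := by
    exact_mod_cast Int.natCast_le_abs_sq_sub_sq hmn
  rw [hcm, abs_mul, abs_of_pos (by positivity : 0 < Real.pi ^ 2)] at hn
  nlinarith [Real.pi_pos]

noncomputable def symmRayleighLamb (a b h u : ℂ) : ℂ :=
  (b - 2 * u) ^ 2 * sincSqrt ((b - u) * h ^ 2) * cosSqrt ((a - u) * h ^ 2)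
    + 4 * u * (a - u) * sincSqrt ((a - u) * h ^ 2) * cosSqrt ((b - u) * h ^ 2)

noncomputable def antisymmRayleighLamb (a b h u : ℂ) : ℂ :=
  (b - 2 * u) ^ 2 * sincSqrt ((a - u) * h ^ 2) * cosSqrt ((b - u) * h ^ 2)
    + 4 * u * (b - u) * sincSqrt ((b - u) * h ^ 2) * cosSqrt ((a - u) * h ^ 2)

theorem analyticOnNhd_symmRayleighLamb (a b h : ℂ) :
    AnalyticOnNhd ℂ (symmRayleighLamb a b h) univ := fun u _ => by
  unfold symmRayleighLamb
  fun_prop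

theorem analyticOnNhd_antisymmRayleighLamb (a b h : ℂ) :
    AnalyticOnNhd ℂ (antisymmRayleighLamb a b h) univ := fun u _ => by
  unfold antisymmRayleighLamb
  fun_prop

section Reduction

variable {a b h k p q : ℂ}

theorem symmRayleighLamb_spec (hp : p ^ 2 = a - k ^ 2) (hq : q ^ 2 = b - k ^ 2) :
    (q ^ 2 - k ^ 2) ^ 2 * sin (q * h) * cos (p * h) + 4 * k ^ 2 * p * q * sin (p * h) * cos (q * h)
      = q * h * symmRayleighLamb a b h (k ^ 2) := by
  rw [← mul_sincSqrt_sq (q * h), ← mul_sincSqrt_sq (p * h), ← cosSqrt_sq (q * h),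
    ← cosSqrt_sq (p * h), mul_pow, mul_pow, hp, hq, symmRayleighLamb]
  linear_combination 4 * k ^ 2 * q * h * sincSqrt ((a - k ^ 2) * h ^ 2)
    * cosSqrt ((b - k ^ 2) * h ^ 2) * hp

theorem antisymmRayleighLamb_spec (hp : p ^ 2 = a - k ^ 2) (hq : q ^ 2 = b - k ^ 2) :
    (q ^ 2 - k ^ 2) ^ 2 * cos (q * h) * sin (p * h) + 4 * k ^ 2 * p * q * cos (p * h) * sin (q * h)
      = p * h * antisymmRayleighLamb a b h (k ^ 2) := by
  rw [← mul_sincSqrt_sq (q * h), ← mul_sincSqrt_sq (p * h), ← cosSqrt_sq (q * h),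
    ← cosSqrt_sq (p * h), mul_pow, mul_pow, hp, hq, antisymmRayleighLamb]
  linear_combination 4 * k ^ 2 * p * h * sincSqrt ((b - k ^ 2) * h ^ 2)
    * cosSqrt ((a - k ^ 2) * h ^ 2) * hq

theorem rayleighLamb_eq_zero_iff (hh : h ≠ 0) (hp : p ^ 2 = a - k ^ 2) (hq : q ^ 2 = b - k ^ 2) :
    ((q ^ 2 - k ^ 2) ^ 2 * sin (q * h) * cos (p * h)
        + 4 * k ^ 2 * p * q * sin (p * h) * cos (q * h))
      * ((q ^ 2 - k ^ 2) ^ 2 * cos (q * h) * sin (p * h)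
        + 4 * k ^ 2 * p * q * cos (p * h) * sin (q * h)) = 0 ↔
    (k ^ 2 = b ∨ symmRayleighLamb a b h (k ^ 2) = 0) ∨
      (k ^ 2 = a ∨ antisymmRayleighLamb a b h (k ^ 2) = 0) := by
  have hp0 : p = 0 ↔ k ^ 2 = a := by
    rw [← pow_eq_zero_iff two_ne_zero, hp, sub_eq_zero, eq_comm]
  have hq0 : q = 0 ↔ k ^ 2 = b := by
    rw [← pow_eq_zero_iff two_ne_zero, hq, sub_eq_zero, eq_comm]
  simp only [symmRayleighLamb_spec hp hq, antisymmRayleighLamb_spec hp hq, mul_eq_zero, hh,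
    or_false, hp0, hq0]

end Reduction

theorem rayleighLamb_self (a h : ℂ) :
    symmRayleighLamb a a h a = a ^ 2 ∧ antisymmRayleighLamb a a h a = a ^ 2 := by
  constructor <;> simp only [symmRayleighLamb, antisymmRayleighLamb, sub_self, zero_mul, mul_zero,
    sincSqrt_zero, cosSqrt_zero] <;> ring

open Real in
theorem exists_rayleighLamb_ne_zero_of_ne {a b h : ℝ} (hh : h ≠ 0) (hab : a ≠ b) :
    ∃ u : ℂ, symmRayleighLamb a b h u ≠ 0 ∧ antisymmRayleighLamb a b h u ≠ 0 := by
  set c := h ^ 2 * (b - a)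
  have hc : c ≠ 0 := mul_ne_zero (pow_ne_zero 2 hh) (sub_ne_zero.2 hab.symm)
  have hscale : Tendsto (fun n : ℕ => (n : ℝ) ^ 2 * (π / h) ^ 2) atTop atTop :=
    ((tendsto_pow_atTop two_ne_zero).comp tendsto_natCast_atTop_atTop).atTop_mul_const
      (by positivity)
  obtain ⟨n, hn0, hnc, hnab⟩ :
      ∃ n : ℕ, n ≠ 0 ∧ |c| < n * π ^ 2 ∧ |a| + |b| < n ^ 2 * (π / h) ^ 2 :=
    ((eventually_ne_atTop 0).and (((tendsto_natCast_atTop_atTop.atTop_mul_const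
      (by positivity)).eventually_gt_atTop _).and (hscale.eventually_gt_atTop _))).exists
  set u : ℝ := a - n ^ 2 * (π / h) ^ 2
  have hu : u < -|b| := by linarith [le_abs_self a]
  have hA : ((a : ℂ) - u) * h ^ 2 = (n * π) ^ 2 := by
    have : (a - u) * h ^ 2 = (n * π) ^ 2 := by simp only [u]; field_simp; ring
    exact_mod_cast this
  have hB : ((b : ℂ) - u) * h ^ 2 = c + (n * π) ^ 2 := by
    have : (b - u) * h ^ 2 = c + (n * π) ^ 2 := by simp only [u, c]; field_simp; ring
    exact_mod_cast this
  have hsin : Complex.sin (n * π) = 0 := Complex.sin_nat_mul_pi n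
  have hS : sincSqrt ((n * π) ^ 2) = 0 := by
    have hnπ : (n * π : ℂ) ≠ 0 :=
      mul_ne_zero (Nat.cast_ne_zero.2 hn0) (ofReal_ne_zero.2 pi_ne_zero)
    simpa [hnπ, hsin] using mul_sincSqrt_sq (n * π)
  have hC : cosSqrt ((n * π) ^ 2) ≠ 0 := by
    rw [cosSqrt_sq]
    intro hcos
    simpa [hsin, hcos] using Complex.sin_sq_add_cos_sq (n * π)
  have hS' : sincSqrt (c + (n * π) ^ 2) ≠ 0 := sincSqrt_add_sq_ne_zero hc hnc
  have hu0 : u < 0 := by linarith [abs_nonneg b]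
  have hbu : 0 < b - u := by linarith [neg_abs_le b]
  have hb2u : 0 < b - 2 * u := by linarith [neg_abs_le b]
  refine ⟨u, ?_, ?_⟩
  · simp only [symmRayleighLamb, hA, hB, hS, mul_zero, zero_mul, add_zero]
    exact mul_ne_zero (mul_ne_zero (pow_ne_zero 2 (mod_cast hb2u.ne')) hS') hC
  · simp only [antisymmRayleighLamb, hA, hB, hS, mul_zero, zero_mul, zero_add]
    refine mul_ne_zero (mul_ne_zero (mul_ne_zero (mul_ne_zero (by norm_num) ?_) ?_) hS') hC
    · exact mod_cast hu0.ne
    · exact mod_cast hbu.ne'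

theorem exists_rayleighLamb_ne_zero {a b h : ℝ} (hh : h ≠ 0) (hb : b ≠ 0) :
    ∃ u : ℂ, symmRayleighLamb a b h u ≠ 0 ∧ antisymmRayleighLamb a b h u ≠ 0 := by
  rcases eq_or_ne a b with rfl | hab
  · have hG := rayleighLamb_self (a : ℂ) h
    exact ⟨a, by simp [hG.1, hb], by simp [hG.2, hb]⟩
  · exact exists_rayleighLamb_ne_zero_of_ne hh hab

theorem lamb_wavenumbers_countable_general
    (lam mu om h0 : ℝ) (hmu : 0 < mu) (hom : 0 < om) (hh : 0 < h0) :
    Set.Countable {k : ℂ | ∃ p q : ℂ,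
      p^2 = (om:ℂ)^2/((lam:ℂ)+2*(mu:ℂ)) - k^2
      ∧ q^2 = (om:ℂ)^2/(mu:ℂ) - k^2
      ∧ ((q^2-k^2)^2 * Complex.sin (q*h0) * Complex.cos (p*h0)
            + 4*k^2*p*q*Complex.sin (p*h0) * Complex.cos (q*h0))
        * ((q^2-k^2)^2 * Complex.cos (q*h0) * Complex.sin (p*h0)
            + 4*k^2*p*q*Complex.cos (p*h0) * Complex.sin (q*h0)) = 0} := by
  set a : ℝ := om ^ 2 / (lam + 2 * mu)
  set b : ℝ := om ^ 2 / mu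
  have ha : (om : ℂ) ^ 2 / (lam + 2 * mu) = a := by simp only [a]; push_cast; ring
  have hb : (om : ℂ) ^ 2 / mu = b := by simp only [b]; push_cast; ring
  obtain ⟨u, hG, hH⟩ := exists_rayleighLamb_ne_zero hh.ne' (by positivity : b ≠ 0)
  have hsq (c : ℂ) : {k : ℂ | k ^ 2 = c}.Countable := by
    have hf : AnalyticOnNhd ℂ (· - c) univ := analyticOnNhd_id.sub analyticOnNhd_const
    simpa [sub_eq_zero] using hf.countable_setOf_pow_eq_zero ⟨c + 1, by simp⟩ two_pos
  have hsymm :=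
    (analyticOnNhd_symmRayleighLamb a b h0).countable_setOf_pow_eq_zero ⟨u, hG⟩ two_pos
  have hanti :=
    (analyticOnNhd_antisymmRayleighLamb a b h0).countable_setOf_pow_eq_zero ⟨u, hH⟩ two_pos
  refine (((hsq b).union hsymm).union ((hsq a).union hanti)).mono ?_
  rintro k ⟨p, q, hp, hq, hk⟩
  rw [ha] at hp
  rw [hb] at hq
  exact (rayleighLamb_eq_zero_iff (ofReal_ne_zero.2 hh.ne') hp hq).1 hk

/-- **Countability of the Lamb spectrum.** For Lamé parameters `mu > 0`, `lam + 2mu > 0`,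
frequency `om > 0` and half-width `h0 > 0`, the set of wavenumbers `k ∈ ℂ` associated to
Lamb modes, i.e. the `k` satisfying the symmetric or the antisymmetric Rayleigh–Lamb
equation (in product form), is countable. -/
theorem lamb_wavenumbers_countable
    (lam mu om h0 : ℝ) (hmu : 0 < mu) (hlm : 0 < lam + 2*mu) (hom : 0 < om) (hh : 0 < h0) :
    Set.Countable {k : ℂ | ∃ p q : ℂ,
      p^2 = (om:ℂ)^2/((lam:ℂ)+2*(mu:ℂ)) - k^2
      ∧ q^2 = (om:ℂ)^2/(mu:ℂ) - k^2
      ∧ ((q^2-k^2)^2 * Complex.sin (q*h0) * Complex.cos (p*h0)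
            + 4*k^2*p*q*Complex.sin (p*h0) * Complex.cos (q*h0))
        * ((q^2-k^2)^2 * Complex.cos (q*h0) * Complex.sin (p*h0)
            + 4*k^2*p*q*Complex.cos (p*h0) * Complex.sin (q*h0)) = 0} :=
  lamb_wavenumbers_countable_general lam mu om h0 hmu hom hh
end

section
/- Let λ, μ, ω, h ∈ ℝ with μ > 0, λ + 2μ > 0, h > 0. Let (X¹, Y¹) and (X², Y²) be pairs of C² functions [−h,h] → ℂ² satisfying F(Yʲ) = ikⱼ Xʲ and G(Xʲ) = ikⱼ Yʲ on [−h,h], with boundary conditions B₁(Xʲ)(±h) = 0 and B₂(Yʲ)(±h) = 0, for j = 1, 2, where k₁, k₂ ∈ ℂ satisfy k₁² ≠ k₂². Then the bi-orthogonality relation holds: ⟨X¹, Y²⟩ = ∫_{−h}^{h} ( X¹₁(z) Y²₁(z) + X¹₂(z) Y²₂(z) ) dz = 0. -/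
open Complex Set intervalIntegral

/-! Under the boundary conditions `B₁ = 0` and `B₂ = 0`, integration by parts shows that `G` and
`F` are symmetric for the bilinear pairing: `⟨G X¹, X²⟩ = ⟨G X², X¹⟩` and
`⟨F Y¹, Y²⟩ = ⟨F Y², Y¹⟩`, because the boundary terms `[X¹₂ X²₁ - X¹₁ X²₂]` and
`[Y¹₂ B₂(Y²) - Y²₂ B₂(Y¹)]` vanish at `±h`. Inserting the mode equations gives
`ik₁ ⟨X¹, Y²⟩ = ik₂ ⟨X², Y¹⟩` and `ik₁ ⟨X², Y¹⟩ = ik₂ ⟨X¹, Y²⟩`, hence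
`(k₁² - k₂²) ⟨X¹, Y²⟩ = 0`. -/

noncomputable def pairing (a b : ℝ) (f₁ f₂ g₁ g₂ : ℝ → ℂ) : ℂ :=
  ∫ z in a..b, (f₁ z * g₁ z + f₂ z * g₂ z)

variable {a b : ℝ}

theorem pairing_comm (f₁ f₂ g₁ g₂ : ℝ → ℂ) :
    pairing a b f₁ f₂ g₁ g₂ = pairing a b g₁ g₂ f₁ f₂ := by
  simp only [pairing, mul_comm]

theorem pairing_eq_mul_of_eqOn (hab : a ≤ b) {f₁ f₂ g₁ g₂ u₁ u₂ : ℝ → ℂ} (κ : ℂ)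
    (h : ∀ z ∈ Icc a b, f₁ z = κ * g₁ z ∧ f₂ z = κ * g₂ z) :
    pairing a b f₁ f₂ u₁ u₂ = κ * pairing a b g₁ g₂ u₁ u₂ := by
  rw [pairing, pairing, ← integral_const_mul]
  refine integral_congr fun z hz => ?_
  obtain ⟨h₁, h₂⟩ := h z (uIcc_of_le hab ▸ hz)
  simp only [h₁, h₂]
  ring

theorem integral_eq_of_hasDerivAt_sub {f g W : ℝ → ℂ} (hf : Continuous f) (hg : Continuous g)
    (hW : ∀ x, HasDerivAt W (f x - g x) x) (ha : W a = 0) (hb : W b = 0) :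
    ∫ x in a..b, f x = ∫ x in a..b, g x := by
  rw [← sub_eq_zero, ← integral_sub (hf.intervalIntegrable a b) (hg.intervalIntegrable a b),
    integral_eq_sub_of_hasDerivAt (fun x _ => hW x) ((hf.sub hg).intervalIntegrable a b), ha, hb,
    sub_zero]

theorem ContDiff.hasDerivAt_deriv {E : Type*} [NormedAddCommGroup E] [NormedSpace ℝ E]
    {f : ℝ → E} (hf : ContDiff ℝ 1 f) (x : ℝ) :
    HasDerivAt f (deriv f x) x :=
  (hf.differentiable one_ne_zero x).hasDerivAt

theorem pairing_opG_symm (p m : ℂ) {A₁ A₂ B₁ B₂ : ℝ → ℂ}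
    (hA₁ : ContDiff ℝ 1 A₁) (hA₂ : ContDiff ℝ 1 A₂) (hB₁ : ContDiff ℝ 1 B₁)
    (hB₂ : ContDiff ℝ 1 B₂) (hAa : A₂ a = 0) (hAb : A₂ b = 0) (hBa : B₂ a = 0) (hBb : B₂ b = 0) :
    pairing a b (fun z => p * A₁ z + deriv A₂ z) (fun z => -deriv A₁ z + A₂ z / m) B₁ B₂
      = pairing a b (fun z => p * B₁ z + deriv B₂ z) (fun z => -deriv B₁ z + B₂ z / m) A₁ A₂ := by
  refine integral_eq_of_hasDerivAt_sub (W := fun z => A₂ z * B₁ z - A₁ z * B₂ z)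
    (by fun_prop) (by fun_prop) (fun x => ?_) (by simp [hAa, hBa]) (by simp [hAb, hBb])
  refine (((hA₂.hasDerivAt_deriv x).mul (hB₁.hasDerivAt_deriv x)).sub
    ((hA₁.hasDerivAt_deriv x).mul (hB₂.hasDerivAt_deriv x))).congr_deriv ?_
  ring

theorem pairing_opF_symm (c d e q : ℂ) {A₁ A₂ B₁ B₂ : ℝ → ℂ}
    (hA₁ : ContDiff ℝ 1 A₁) (hA₂ : ContDiff ℝ 2 A₂) (hB₁ : ContDiff ℝ 1 B₁)
    (hB₂ : ContDiff ℝ 2 B₂)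
    (hAa : -c * A₁ a + d * deriv A₂ a = 0) (hAb : -c * A₁ b + d * deriv A₂ b = 0)
    (hBa : -c * B₁ a + d * deriv B₂ a = 0) (hBb : -c * B₁ b + d * deriv B₂ b = 0) :
    pairing a b (fun z => -A₁ z / e - c * deriv A₂ z)
        (fun z => c * deriv A₁ z - q * A₂ z - d * deriv (deriv A₂) z) B₁ B₂
      = pairing a b (fun z => -B₁ z / e - c * deriv B₂ z)
        (fun z => c * deriv B₁ z - q * B₂ z - d * deriv (deriv B₂) z) A₁ A₂ := by
  have hA₂' : ContDiff ℝ 1 (deriv A₂) := hA₂.deriv'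
  have hB₂' : ContDiff ℝ 1 (deriv B₂) := hB₂.deriv'
  replace hA₂ : ContDiff ℝ 1 A₂ := hA₂.of_le one_le_two
  replace hB₂ : ContDiff ℝ 1 B₂ := hB₂.of_le one_le_two
  refine integral_eq_of_hasDerivAt_sub
    (W := fun z => B₂ z * (c * A₁ z - d * deriv A₂ z) - A₂ z * (c * B₁ z - d * deriv B₂ z))
    (by fun_prop) (by fun_prop) (fun x => ?_)
    (by linear_combination A₂ a * hBa - B₂ a * hAa) (by linear_combination A₂ b * hBb - B₂ b * hAb)
  refine (((hB₂.hasDerivAt_deriv x).mul (((hA₁.hasDerivAt_deriv x).const_mul c).sub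
    ((hA₂'.hasDerivAt_deriv x).const_mul d))).sub ((hA₂.hasDerivAt_deriv x).mul
    (((hB₁.hasDerivAt_deriv x).const_mul c).sub ((hB₂'.hasDerivAt_deriv x).const_mul d))))
    |>.congr_deriv ?_
  simp only [Pi.sub_apply]
  ring

theorem eq_zero_of_mul_eq_of_mul_eq {R : Type*} [CommRing R] [NoZeroDivisors R] {k₁ k₂ A B : R}
    (hk : k₁ ^ 2 ≠ k₂ ^ 2) (h₁ : k₁ * A = k₂ * B) (h₂ : k₁ * B = k₂ * A) : A = 0 := by
  have h : (k₁ ^ 2 - k₂ ^ 2) * A = 0 := by linear_combination k₁ * h₁ + k₂ * h₂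
  exact (mul_eq_zero.mp h).resolve_left (sub_ne_zero.mpr hk)

theorem lamb_modes_biorthogonality_general
    (lam mu om h0 : ℝ) (hh : 0 < h0)
    (k₁ k₂ : ℂ) (hk : k₁^2 ≠ k₂^2)
    (X11 X12 Y11 Y12 X21 X22 Y21 Y22 : ℝ → ℂ)
    (hX11 : ContDiff ℝ 2 X11) (hX12 : ContDiff ℝ 2 X12)
    (hY11 : ContDiff ℝ 2 Y11) (hY12 : ContDiff ℝ 2 Y12)
    (hX21 : ContDiff ℝ 2 X21) (hX22 : ContDiff ℝ 2 X22)
    (hY21 : ContDiff ℝ 2 Y21) (hY22 : ContDiff ℝ 2 Y22)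
    (hF1 : ∀ z ∈ Set.Icc (-h0) h0,
        -(Y11 z)/((lam:ℂ)+2*(mu:ℂ)) - ((lam:ℂ)/((lam:ℂ)+2*(mu:ℂ))) * deriv Y12 z
          = Complex.I*k₁*X11 z
        ∧ ((lam:ℂ)/((lam:ℂ)+2*(mu:ℂ))) * deriv Y11 z - (om:ℂ)^2 * Y12 z
            - ((4*(mu:ℂ)*((lam:ℂ)+(mu:ℂ)))/((lam:ℂ)+2*(mu:ℂ))) * deriv (deriv Y12) z
          = Complex.I*k₁*X12 z)
    (hG1 : ∀ z ∈ Set.Icc (-h0) h0,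
        (om:ℂ)^2 * X11 z + deriv X12 z = Complex.I*k₁*Y11 z
        ∧ -(deriv X11 z) + X12 z/(mu:ℂ) = Complex.I*k₁*Y12 z)
    (hF2 : ∀ z ∈ Set.Icc (-h0) h0,
        -(Y21 z)/((lam:ℂ)+2*(mu:ℂ)) - ((lam:ℂ)/((lam:ℂ)+2*(mu:ℂ))) * deriv Y22 z
          = Complex.I*k₂*X21 z
        ∧ ((lam:ℂ)/((lam:ℂ)+2*(mu:ℂ))) * deriv Y21 z - (om:ℂ)^2 * Y22 z
            - ((4*(mu:ℂ)*((lam:ℂ)+(mu:ℂ)))/((lam:ℂ)+2*(mu:ℂ))) * deriv (deriv Y22) z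
          = Complex.I*k₂*X22 z)
    (hG2 : ∀ z ∈ Set.Icc (-h0) h0,
        (om:ℂ)^2 * X21 z + deriv X22 z = Complex.I*k₂*Y21 z
        ∧ -(deriv X21 z) + X22 z/(mu:ℂ) = Complex.I*k₂*Y22 z)
    (hB11 : X12 h0 = 0 ∧ X12 (-h0) = 0)
    (hB12 : -((lam:ℂ)/((lam:ℂ)+2*(mu:ℂ))) * Y11 h0
            + ((4*(mu:ℂ)*((lam:ℂ)+(mu:ℂ)))/((lam:ℂ)+2*(mu:ℂ))) * deriv Y12 h0 = 0
          ∧ -((lam:ℂ)/((lam:ℂ)+2*(mu:ℂ))) * Y11 (-h0)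
            + ((4*(mu:ℂ)*((lam:ℂ)+(mu:ℂ)))/((lam:ℂ)+2*(mu:ℂ))) * deriv Y12 (-h0) = 0)
    (hB21 : X22 h0 = 0 ∧ X22 (-h0) = 0)
    (hB22 : -((lam:ℂ)/((lam:ℂ)+2*(mu:ℂ))) * Y21 h0
            + ((4*(mu:ℂ)*((lam:ℂ)+(mu:ℂ)))/((lam:ℂ)+2*(mu:ℂ))) * deriv Y22 h0 = 0
          ∧ -((lam:ℂ)/((lam:ℂ)+2*(mu:ℂ))) * Y21 (-h0)
            + ((4*(mu:ℂ)*((lam:ℂ)+(mu:ℂ)))/((lam:ℂ)+2*(mu:ℂ))) * deriv Y22 (-h0) = 0) :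
    ∫ z in (-h0)..h0, (X11 z * Y21 z + X12 z * Y22 z) = 0 := by
  have hle : -h0 ≤ h0 := by linarith
  show pairing (-h0) h0 X11 X12 Y21 Y22 = 0
  refine eq_zero_of_mul_eq_of_mul_eq (k₁ := I * k₁) (k₂ := I * k₂)
    (B := pairing (-h0) h0 X21 X22 Y11 Y12) (by simpa [mul_pow] using hk) ?_ ?_
  · calc I * k₁ * pairing (-h0) h0 X11 X12 Y21 Y22
        = pairing (-h0) h0 _ _ Y21 Y22 := (pairing_eq_mul_of_eqOn hle _ hF1).symm
      _ = pairing (-h0) h0 _ _ Y11 Y12 :=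
          pairing_opF_symm _ _ _ _ (hY11.of_le one_le_two) hY12 (hY21.of_le one_le_two) hY22
            hB12.2 hB12.1 hB22.2 hB22.1
      _ = I * k₂ * pairing (-h0) h0 X21 X22 Y11 Y12 := pairing_eq_mul_of_eqOn hle _ hF2
  · calc I * k₁ * pairing (-h0) h0 X21 X22 Y11 Y12
        = I * k₁ * pairing (-h0) h0 Y11 Y12 X21 X22 := by rw [pairing_comm]
      _ = pairing (-h0) h0 _ _ X21 X22 := (pairing_eq_mul_of_eqOn hle _ hG1).symm
      _ = pairing (-h0) h0 _ _ X11 X12 :=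
          pairing_opG_symm _ _ (hX11.of_le one_le_two) (hX12.of_le one_le_two)
            (hX21.of_le one_le_two) (hX22.of_le one_le_two) hB11.2 hB11.1 hB21.2 hB21.1
      _ = I * k₂ * pairing (-h0) h0 Y21 Y22 X11 X12 := pairing_eq_mul_of_eqOn hle _ hG2
      _ = I * k₂ * pairing (-h0) h0 X11 X12 Y21 Y22 := by rw [pairing_comm]

/-- **Bi-orthogonality of Lamb modes.** If `(X¹, Y¹)` and `(X², Y²)` are Lamb modes with
wavenumbers `k₁, k₂` satisfying `k₁² ≠ k₂²` (i.e. `F(Yʲ) = ikⱼXʲ`, `G(Xʲ) = ikⱼYʲ` on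
`[-h0, h0]` with boundary conditions `B₁(Xʲ)(±h0) = B₂(Yʲ)(±h0) = 0`), then
`⟨X¹, Y²⟩ = ∫_{-h0}^{h0} (X¹₁ Y²₁ + X¹₂ Y²₂) = 0`. -/
theorem lamb_modes_biorthogonality
    (lam mu om h0 : ℝ) (hmu : 0 < mu) (hlm : 0 < lam + 2*mu) (hh : 0 < h0)
    (k₁ k₂ : ℂ) (hk : k₁^2 ≠ k₂^2)
    (X11 X12 Y11 Y12 X21 X22 Y21 Y22 : ℝ → ℂ)
    (hX11 : ContDiff ℝ 2 X11) (hX12 : ContDiff ℝ 2 X12)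
    (hY11 : ContDiff ℝ 2 Y11) (hY12 : ContDiff ℝ 2 Y12)
    (hX21 : ContDiff ℝ 2 X21) (hX22 : ContDiff ℝ 2 X22)
    (hY21 : ContDiff ℝ 2 Y21) (hY22 : ContDiff ℝ 2 Y22)
    (hF1 : ∀ z ∈ Set.Icc (-h0) h0,
        -(Y11 z)/((lam:ℂ)+2*(mu:ℂ)) - ((lam:ℂ)/((lam:ℂ)+2*(mu:ℂ))) * deriv Y12 z
          = Complex.I*k₁*X11 z
        ∧ ((lam:ℂ)/((lam:ℂ)+2*(mu:ℂ))) * deriv Y11 z - (om:ℂ)^2 * Y12 z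
            - ((4*(mu:ℂ)*((lam:ℂ)+(mu:ℂ)))/((lam:ℂ)+2*(mu:ℂ))) * deriv (deriv Y12) z
          = Complex.I*k₁*X12 z)
    (hG1 : ∀ z ∈ Set.Icc (-h0) h0,
        (om:ℂ)^2 * X11 z + deriv X12 z = Complex.I*k₁*Y11 z
        ∧ -(deriv X11 z) + X12 z/(mu:ℂ) = Complex.I*k₁*Y12 z)
    (hF2 : ∀ z ∈ Set.Icc (-h0) h0,
        -(Y21 z)/((lam:ℂ)+2*(mu:ℂ)) - ((lam:ℂ)/((lam:ℂ)+2*(mu:ℂ))) * deriv Y22 z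
          = Complex.I*k₂*X21 z
        ∧ ((lam:ℂ)/((lam:ℂ)+2*(mu:ℂ))) * deriv Y21 z - (om:ℂ)^2 * Y22 z
            - ((4*(mu:ℂ)*((lam:ℂ)+(mu:ℂ)))/((lam:ℂ)+2*(mu:ℂ))) * deriv (deriv Y22) z
          = Complex.I*k₂*X22 z)
    (hG2 : ∀ z ∈ Set.Icc (-h0) h0,
        (om:ℂ)^2 * X21 z + deriv X22 z = Complex.I*k₂*Y21 z
        ∧ -(deriv X21 z) + X22 z/(mu:ℂ) = Complex.I*k₂*Y22 z)
    (hB11 : X12 h0 = 0 ∧ X12 (-h0) = 0)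
    (hB12 : -((lam:ℂ)/((lam:ℂ)+2*(mu:ℂ))) * Y11 h0
            + ((4*(mu:ℂ)*((lam:ℂ)+(mu:ℂ)))/((lam:ℂ)+2*(mu:ℂ))) * deriv Y12 h0 = 0
          ∧ -((lam:ℂ)/((lam:ℂ)+2*(mu:ℂ))) * Y11 (-h0)
            + ((4*(mu:ℂ)*((lam:ℂ)+(mu:ℂ)))/((lam:ℂ)+2*(mu:ℂ))) * deriv Y12 (-h0) = 0)
    (hB21 : X22 h0 = 0 ∧ X22 (-h0) = 0)
    (hB22 : -((lam:ℂ)/((lam:ℂ)+2*(mu:ℂ))) * Y21 h0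
            + ((4*(mu:ℂ)*((lam:ℂ)+(mu:ℂ)))/((lam:ℂ)+2*(mu:ℂ))) * deriv Y22 h0 = 0
          ∧ -((lam:ℂ)/((lam:ℂ)+2*(mu:ℂ))) * Y21 (-h0)
            + ((4*(mu:ℂ)*((lam:ℂ)+(mu:ℂ)))/((lam:ℂ)+2*(mu:ℂ))) * deriv Y22 (-h0) = 0) :
    ∫ z in (-h0)..h0, (X11 z * Y21 z + X12 z * Y22 z) = 0 :=
  lamb_modes_biorthogonality_general lam mu om h0 hh k₁ k₂ hk X11 X12 Y11 Y12 X21 X22 Y21 Y22 hX11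
    hX12 hY11 hY12 hX21 hX22 hY21 hY22 hF1 hG1 hF2 hG2 hB11 hB12 hB21 hB22
end

section
/- Let λ, μ, ω ∈ ℝ with μ > 0, λ + 2μ > 0, let Ω ⊆ ℝ² be open, and let u, v : Ω → ℂ be C² and f₁, f₂ : Ω → ℂ continuous. Define s = (λ+2μ)∂ₓu + λ∂_z v, t = μ(∂_z u + ∂ₓ v), r = λ∂ₓu + (λ+2μ)∂_z v. Assume the elasticity system holds in Ω: ∂ₓ s + ∂_z t + ω² u = −f₁ and ∂ₓ t + ∂_z r + ω² v = −f₂. Then, setting X = (u, t) and Y = (−s, v), the following first-order system holds in Ω: ∂ₓ X₁ = F(Y)₁, ∂ₓ X₂ = F(Y)₂ − f₂, ∂ₓ Y₁ = G(X)₁ + f₁, ∂ₓ Y₂ = G(X)₂, where F and G are applied in the variable z at each fixed x. -/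
open Complex Set

/-- Partial derivative in the `x` direction of a function on `ℝ²`. -/
noncomputable def pdx (f : ℝ × ℝ → ℂ) (p : ℝ × ℝ) : ℂ := fderiv ℝ f p (1, 0)

/-- Partial derivative in the `z` direction of a function on `ℝ²`. -/
noncomputable def pdz (f : ℝ × ℝ → ℂ) (p : ℝ × ℝ) : ℂ := fderiv ℝ f p (0, 1)

/-
The first and last equations just solve the constitutive laws for `s` and `t` for `∂ₓu` and
`∂ₓv`, and the third is the first equilibrium equation. The second one is the second
equilibrium equation after eliminating the mixed derivative `∂_z∂ₓu` between `∂_z s` and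
`∂_z r`, which needs `∂ₓu` and `∂_z v` to be differentiable.
-/

theorem ContDiffAt.differentiableAt_fderiv_apply {𝕜 E F : Type*} [NontriviallyNormedField 𝕜]
    [NormedAddCommGroup E] [NormedSpace 𝕜 E] [NormedAddCommGroup F] [NormedSpace 𝕜 F]
    {f : E → F} {x : E} (hf : ContDiffAt 𝕜 2 f x) (w : E) :
    DifferentiableAt 𝕜 (fun y => fderiv 𝕜 f y w) x :=
  ((hf.fderiv_right (m := 1) le_rfl).differentiableAt one_ne_zero).clm_apply
    (differentiableAt_const w)

theorem ContDiffAt.differentiableAt_pdx {f : ℝ × ℝ → ℂ} {p : ℝ × ℝ} (hf : ContDiffAt ℝ 2 f p) :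
    DifferentiableAt ℝ (pdx f) p :=
  hf.differentiableAt_fderiv_apply (1, 0)

theorem ContDiffAt.differentiableAt_pdz {f : ℝ × ℝ → ℂ} {p : ℝ × ℝ} (hf : ContDiffAt ℝ 2 f p) :
    DifferentiableAt ℝ (pdz f) p :=
  hf.differentiableAt_fderiv_apply (0, 1)

theorem pdx_neg (f : ℝ × ℝ → ℂ) (p : ℝ × ℝ) : pdx (fun q => -f q) p = -pdx f p := by
  simp [pdx, fderiv_fun_neg]

theorem pdz_neg (f : ℝ × ℝ → ℂ) (p : ℝ × ℝ) : pdz (fun q => -f q) p = -pdz f p := by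
  simp [pdz, fderiv_fun_neg]

theorem pdz_const_mul_add_const_mul {f g : ℝ × ℝ → ℂ} {p : ℝ × ℝ} (a b : ℂ)
    (hf : DifferentiableAt ℝ f p) (hg : DifferentiableAt ℝ g p) :
    pdz (fun q => a * f q + b * g q) p = a * pdz f p + b * pdz g p := by
  simp [pdz, fderiv_fun_add (hf.const_mul a) (hg.const_mul b), fderiv_const_mul hf,
    fderiv_const_mul hg]

theorem elasticity_XY_formulation_general
    (lam mu om : ℝ) (hmu : 0 < mu) (hlm : 0 < lam + 2*mu)
    (Ω : Set (ℝ × ℝ)) (hΩ : IsOpen Ω)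
    (u v f₁ f₂ : ℝ × ℝ → ℂ)
    (hu : ContDiffOn ℝ 2 u Ω) (hv : ContDiffOn ℝ 2 v Ω)
    (s t r : ℝ × ℝ → ℂ)
    (hs : s = fun p => ((lam:ℂ)+2*(mu:ℂ)) * pdx u p + (lam:ℂ) * pdz v p)
    (ht : t = fun p => (mu:ℂ) * (pdz u p + pdx v p))
    (hr : r = fun p => (lam:ℂ) * pdx u p + ((lam:ℂ)+2*(mu:ℂ)) * pdz v p)
    (helas1 : ∀ p ∈ Ω, pdx s p + pdz t p + (om:ℂ)^2 * u p = -(f₁ p))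
    (helas2 : ∀ p ∈ Ω, pdx t p + pdz r p + (om:ℂ)^2 * v p = -(f₂ p)) :
    ∀ p ∈ Ω,
      (pdx u p = -(-(s p))/((lam:ℂ)+2*(mu:ℂ))
          - ((lam:ℂ)/((lam:ℂ)+2*(mu:ℂ))) * pdz v p)
      ∧ (pdx t p = ((lam:ℂ)/((lam:ℂ)+2*(mu:ℂ))) * pdz (fun q => -(s q)) p
          - (om:ℂ)^2 * v p
          - ((4*(mu:ℂ)*((lam:ℂ)+(mu:ℂ)))/((lam:ℂ)+2*(mu:ℂ))) * pdz (fun q => pdz v q) p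
          - f₂ p)
      ∧ (pdx (fun q => -(s q)) p = (om:ℂ)^2 * u p + pdz t p + f₁ p)
      ∧ (pdx v p = -(pdz u p) + t p/(mu:ℂ)) := by
  intro p hp
  have hL : (lam:ℂ) + 2*(mu:ℂ) ≠ 0 := by exact_mod_cast hlm.ne'
  have hM : (mu:ℂ) ≠ 0 := by exact_mod_cast hmu.ne'
  have hux := (hu.contDiffAt (hΩ.mem_nhds hp)).differentiableAt_pdx
  have hvz := (hv.contDiffAt (hΩ.mem_nhds hp)).differentiableAt_pdz
  have hsz : pdz s p = ((lam:ℂ)+2*(mu:ℂ)) * pdz (pdx u) p + (lam:ℂ) * pdz (pdz v) p := by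
    rw [hs]; exact pdz_const_mul_add_const_mul _ _ hux hvz
  have hrz : pdz r p = (lam:ℂ) * pdz (pdx u) p + ((lam:ℂ)+2*(mu:ℂ)) * pdz (pdz v) p := by
    rw [hr]; exact pdz_const_mul_add_const_mul _ _ hux hvz
  refine ⟨?_, ?_, ?_, ?_⟩
  · rw [hs]; field_simp; ring
  · rw [pdz_neg, hsz]
    field_simp
    linear_combination ((lam:ℂ)+2*(mu:ℂ)) * (helas2 p hp - hrz)
  · rw [pdx_neg]; linear_combination -helas1 p hp
  · rw [ht]; field_simp; ring

/-- **The X/Y formulation of 2D elasticity.** If `(u, v)` is a C² solution of the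
time-harmonic elasticity system `∇·σ(u,v) + ω²(u,v) = −(f₁,f₂)` in an open set `Ω`,
then with `X = (u, t)` and `Y = (−s, v)` (where `s, t, r` are the entries of the stress
tensor) the first-order system `∂ₓX = F(Y) + (0, −f₂)`, `∂ₓY = G(X) + (f₁, 0)` holds in
`Ω`, `F` and `G` acting in the variable `z`. -/
theorem elasticity_XY_formulation
    (lam mu om : ℝ) (hmu : 0 < mu) (hlm : 0 < lam + 2*mu)
    (Ω : Set (ℝ × ℝ)) (hΩ : IsOpen Ω)
    (u v f₁ f₂ : ℝ × ℝ → ℂ)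
    (hu : ContDiffOn ℝ 2 u Ω) (hv : ContDiffOn ℝ 2 v Ω)
    (hf₁ : ContinuousOn f₁ Ω) (hf₂ : ContinuousOn f₂ Ω)
    (s t r : ℝ × ℝ → ℂ)
    (hs : s = fun p => ((lam:ℂ)+2*(mu:ℂ)) * pdx u p + (lam:ℂ) * pdz v p)
    (ht : t = fun p => (mu:ℂ) * (pdz u p + pdx v p))
    (hr : r = fun p => (lam:ℂ) * pdx u p + ((lam:ℂ)+2*(mu:ℂ)) * pdz v p)
    (helas1 : ∀ p ∈ Ω, pdx s p + pdz t p + (om:ℂ)^2 * u p = -(f₁ p))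
    (helas2 : ∀ p ∈ Ω, pdx t p + pdz r p + (om:ℂ)^2 * v p = -(f₂ p)) :
    ∀ p ∈ Ω,
      (pdx u p = -(-(s p))/((lam:ℂ)+2*(mu:ℂ))
          - ((lam:ℂ)/((lam:ℂ)+2*(mu:ℂ))) * pdz v p)
      ∧ (pdx t p = ((lam:ℂ)/((lam:ℂ)+2*(mu:ℂ))) * pdz (fun q => -(s q)) p
          - (om:ℂ)^2 * v p
          - ((4*(mu:ℂ)*((lam:ℂ)+(mu:ℂ)))/((lam:ℂ)+2*(mu:ℂ))) * pdz (fun q => pdz v q) p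
          - f₂ p)
      ∧ (pdx (fun q => -(s q)) p = (om:ℂ)^2 * u p + pdz t p + f₁ p)
      ∧ (pdx v p = -(pdz u p) + t p/(mu:ℂ)) :=
  elasticity_XY_formulation_general lam mu om hmu hlm Ω hΩ u v f₁ f₂ hu hv s t r hs ht hr helas1
    helas2
end

section
/- Let λ, μ, ω ∈ ℝ with μ > 0, λ + 2μ > 0, let Ω ⊆ ℝ³ be open, let 𝐮 = (u, v, w) : Ω → ℂ³ be C³ and 𝐟 = (f₁, f₂, f₃) : Ω → ℂ³ be C¹. Assume that in Ω the 3D time-harmonic elasticity equation holds componentwise: μΔ𝐮 + (λ+μ)∇(∂ₓu + ∂_y v + ∂_z w) + ω²𝐮 = −𝐟. Then α := ∂ₓ u + ∂_y v and w satisfy, in Ω, the coupled system: (λ+2μ)Δ₂α + μ∂_zz α + ω²α + (λ+μ)Δ₂(∂_z w) = −(∂ₓ f₁ + ∂_y f₂), and (λ+μ)∂_z α + (λ+2μ)∂_zz w + μΔ₂ w + ω² w = −f₃, where Δ₂g = ∂ₓₓg + ∂_yy g. -/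
/-
Apply `∂ₓ` to the first and `∂_y` to the second elasticity equation and add them. Since third
partial derivatives of a `C³` function commute, `μ(∂ₓΔu + ∂_yΔv) = μΔα`, and writing
`div 𝐮 = α + ∂_z w` splits `(λ+μ)Δ₂(div 𝐮)` into `(λ+μ)Δ₂α + (λ+μ)Δ₂(∂_z w)`; together with
`μΔα = μΔ₂α + μ∂_zz α` this is the first identity. The second is the third elasticity equation
with `∂_z(div 𝐮) = ∂_z α + ∂_zz w`.
-/

open Complex Set

/-- Partial derivative in the `x` direction of a function on `ℝ³`. -/
noncomputable def pdx3 (f : ℝ × ℝ × ℝ → ℂ) (p : ℝ × ℝ × ℝ) : ℂ := fderiv ℝ f p (1, 0, 0)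

/-- Partial derivative in the `y` direction of a function on `ℝ³`. -/
noncomputable def pdy3 (f : ℝ × ℝ × ℝ → ℂ) (p : ℝ × ℝ × ℝ) : ℂ := fderiv ℝ f p (0, 1, 0)

/-- Partial derivative in the `z` direction of a function on `ℝ³`. -/
noncomputable def pdz3 (f : ℝ × ℝ × ℝ → ℂ) (p : ℝ × ℝ × ℝ) : ℂ := fderiv ℝ f p (0, 0, 1)

/-- Planar Laplacian `Δ₂ = ∂ₓₓ + ∂_yy` of a function on `ℝ³`. -/
noncomputable def lap2 (f : ℝ × ℝ × ℝ → ℂ) (p : ℝ × ℝ × ℝ) : ℂ :=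
  pdx3 (fun q => pdx3 f q) p + pdy3 (fun q => pdy3 f q) p

open Filter Topology

section

variable {E F 𝔸 : Type*} [NormedAddCommGroup E] [NormedSpace ℝ E]
  [NormedAddCommGroup F] [NormedSpace ℝ F] [NormedCommRing 𝔸] [NormedAlgebra ℝ 𝔸]

-- `pdx3`, `pdy3`, `pdz3` are, definitionally, `dirDeriv` along the standard basis vectors.
noncomputable def dirDeriv (a : E) (f : E → F) : E → F := fun p => fderiv ℝ f p a

section

variable {f g : E → F} {p : E}

theorem ContDiffAt.dirDeriv {n : WithTop ℕ∞} (hf : ContDiffAt ℝ (n + 1) f p) (a : E) :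
    ContDiffAt ℝ n (dirDeriv a f) p :=
  hf.fderiv_right_succ.clm_apply contDiffAt_const

theorem Filter.EventuallyEq.dirDeriv_eq (h : f =ᶠ[𝓝 p] g) (a : E) :
    dirDeriv a f p = dirDeriv a g p := by
  rw [dirDeriv, dirDeriv, h.fderiv_eq]

theorem dirDeriv_add (hf : DifferentiableAt ℝ f p) (hg : DifferentiableAt ℝ g p) (a : E) :
    dirDeriv a (fun q => f q + g q) p = dirDeriv a f p + dirDeriv a g p := by
  rw [dirDeriv, fderiv_fun_add hf hg]; rfl

theorem dirDeriv_neg (a : E) : dirDeriv a (fun q => -f q) p = -dirDeriv a f p := by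
  rw [dirDeriv, fderiv_fun_neg]; rfl

theorem dirDeriv_dirDeriv (hf : DifferentiableAt ℝ (fderiv ℝ f) p) (a b : E) :
    dirDeriv a (dirDeriv b f) p = fderiv ℝ (fderiv ℝ f) p a b := by
  change fderiv ℝ (fun q => fderiv ℝ f q b) p a = _
  simp [fderiv_clm_apply hf (differentiableAt_const b)]

theorem dirDeriv_comm (hf : ContDiffAt ℝ 2 f p) (a b : E) :
    dirDeriv a (dirDeriv b f) p = dirDeriv b (dirDeriv a f) p := by
  have hf' : DifferentiableAt ℝ (fderiv ℝ f) p :=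
    (hf.fderiv_right (m := 1) le_rfl).differentiableAt one_ne_zero
  rw [dirDeriv_dirDeriv hf', dirDeriv_dirDeriv hf']
  exact hf.isSymmSndFDerivAt (by simp [minSmoothness_of_isRCLikeNormedField]) a b

theorem dirDeriv_comm_eventuallyEq (hf : ContDiffAt ℝ 2 f p) (a b : E) :
    dirDeriv a (dirDeriv b f) =ᶠ[𝓝 p] dirDeriv b (dirDeriv a f) := by
  filter_upwards [hf.eventually (by simp)] with q hq
  exact dirDeriv_comm hq a b

theorem dirDeriv_dirDeriv_dirDeriv_comm (hf : ContDiffAt ℝ 3 f p) (a b : E) :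
    dirDeriv a (dirDeriv b (dirDeriv b f)) p = dirDeriv b (dirDeriv b (dirDeriv a f)) p := by
  rw [dirDeriv_comm (hf.dirDeriv (n := 2) b) a b]
  exact (dirDeriv_comm_eventuallyEq (hf.of_le (by norm_num)) a b).dirDeriv_eq b

theorem dirDeriv_add_eventuallyEq (hf : ContDiffAt ℝ 1 f p) (hg : ContDiffAt ℝ 1 g p) (a : E) :
    dirDeriv a (fun q => f q + g q) =ᶠ[𝓝 p] fun q => dirDeriv a f q + dirDeriv a g q := by
  filter_upwards [hf.eventually (by simp), hg.eventually (by simp)] with q hfq hgq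
  exact dirDeriv_add (hfq.differentiableAt one_ne_zero) (hgq.differentiableAt one_ne_zero) a

theorem dirDeriv_dirDeriv_add (hf : ContDiffAt ℝ 2 f p) (hg : ContDiffAt ℝ 2 g p) (a b : E) :
    dirDeriv b (dirDeriv a (fun q => f q + g q)) p
      = dirDeriv b (dirDeriv a f) p + dirDeriv b (dirDeriv a g) p := by
  rw [(dirDeriv_add_eventuallyEq (hf.of_le one_le_two) (hg.of_le one_le_two) a).dirDeriv_eq b]
  exact dirDeriv_add ((hf.dirDeriv (n := 1) a).differentiableAt one_ne_zero)
    ((hg.dirDeriv (n := 1) a).differentiableAt one_ne_zero) b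

end

theorem dirDeriv_const_mul {f : E → 𝔸} {p : E} (c : 𝔸) (hf : DifferentiableAt ℝ f p) (a : E) :
    dirDeriv a (fun q => c * f q) p = c * dirDeriv a f p := by
  rw [dirDeriv, fderiv_const_mul hf]; rfl

variable {u v w f₁ f₂ f₃ α : E → 𝔸} {p : E} {lam mu om : 𝔸}

theorem planarDiv_equation_of_elasticity (a b c : E)
    (hu : ContDiffAt ℝ 3 u p) (hv : ContDiffAt ℝ 3 v p) (hw : ContDiffAt ℝ 3 w p)
    (h₁ : (fun q => mu * (dirDeriv a (dirDeriv a u) q + dirDeriv b (dirDeriv b u) q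
          + dirDeriv c (dirDeriv c u) q)
        + (lam + mu) * dirDeriv a (fun q => dirDeriv a u q + dirDeriv b v q + dirDeriv c w q) q
        + om ^ 2 * u q) =ᶠ[𝓝 p] fun q => -f₁ q)
    (h₂ : (fun q => mu * (dirDeriv a (dirDeriv a v) q + dirDeriv b (dirDeriv b v) q
          + dirDeriv c (dirDeriv c v) q)
        + (lam + mu) * dirDeriv b (fun q => dirDeriv a u q + dirDeriv b v q + dirDeriv c w q) q
        + om ^ 2 * v q) =ᶠ[𝓝 p] fun q => -f₂ q)
    (hα : α = fun q => dirDeriv a u q + dirDeriv b v q) :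
    (lam + 2 * mu) * (dirDeriv a (dirDeriv a α) p + dirDeriv b (dirDeriv b α) p)
        + mu * dirDeriv c (dirDeriv c α) p + om ^ 2 * α p
        + (lam + mu) * (dirDeriv a (dirDeriv a (dirDeriv c w)) p
          + dirDeriv b (dirDeriv b (dirDeriv c w)) p)
      = -(dirDeriv a f₁ p + dirDeriv b f₂ p) := by
  subst hα
  have hu₂ (x : E) : ContDiffAt ℝ 2 (dirDeriv x u) p := hu.dirDeriv x
  have hv₂ (x : E) : ContDiffAt ℝ 2 (dirDeriv x v) p := hv.dirDeriv x
  have hα₂ := (hu₂ a).add (hv₂ b)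
  have hwc₂ := hw.dirDeriv (n := 2) c
  -- side conditions for the `fun_prop` discharger below
  have : DifferentiableAt ℝ u p := hu.differentiableAt (by norm_num)
  have : DifferentiableAt ℝ v p := hv.differentiableAt (by norm_num)
  have (x y : E) : DifferentiableAt ℝ (dirDeriv x (dirDeriv y u)) p :=
    ((hu₂ y).dirDeriv (n := 1) x).differentiableAt one_ne_zero
  have (x y : E) : DifferentiableAt ℝ (dirDeriv x (dirDeriv y v)) p :=
    ((hv₂ y).dirDeriv (n := 1) x).differentiableAt one_ne_zero
  have (x : E) : DifferentiableAt ℝ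
      (dirDeriv x (fun q => dirDeriv a u q + dirDeriv b v q + dirDeriv c w q)) p :=
    ((hα₂.add hwc₂).dirDeriv (n := 1) x).differentiableAt one_ne_zero
  have E₁ := h₁.dirDeriv_eq a
  have E₂ := h₂.dirDeriv_eq b
  simp (disch := fun_prop) only [dirDeriv_add, dirDeriv_const_mul, dirDeriv_neg] at E₁ E₂
  linear_combination E₁ + E₂
    - (lam + mu) * dirDeriv_dirDeriv_add hα₂ hwc₂ a a
    - (lam + mu) * dirDeriv_dirDeriv_add hα₂ hwc₂ b b
    + mu * dirDeriv_dirDeriv_add (hu₂ a) (hv₂ b) a a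
    + mu * dirDeriv_dirDeriv_add (hu₂ a) (hv₂ b) b b
    + mu * dirDeriv_dirDeriv_add (hu₂ a) (hv₂ b) c c
    - mu * dirDeriv_dirDeriv_dirDeriv_comm hv b a
    - mu * dirDeriv_dirDeriv_dirDeriv_comm hu a b
    - mu * dirDeriv_dirDeriv_dirDeriv_comm hu a c
    - mu * dirDeriv_dirDeriv_dirDeriv_comm hv b c

theorem vertical_equation_of_elasticity (a b c : E)
    (hu : ContDiffAt ℝ 2 u p) (hv : ContDiffAt ℝ 2 v p) (hw : ContDiffAt ℝ 2 w p)
    (h₃ : mu * (dirDeriv a (dirDeriv a w) p + dirDeriv b (dirDeriv b w) p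
          + dirDeriv c (dirDeriv c w) p)
        + (lam + mu) * dirDeriv c (fun q => dirDeriv a u q + dirDeriv b v q + dirDeriv c w q) p
        + om ^ 2 * w p = -f₃ p)
    (hα : α = fun q => dirDeriv a u q + dirDeriv b v q) :
    (lam + mu) * dirDeriv c α p + (lam + 2 * mu) * dirDeriv c (dirDeriv c w) p
        + mu * (dirDeriv a (dirDeriv a w) p + dirDeriv b (dirDeriv b w) p) + om ^ 2 * w p
      = -f₃ p := by
  subst hα
  have hα₁ := ((hu.dirDeriv (n := 1) a).add (hv.dirDeriv (n := 1) b)).differentiableAt one_ne_zero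
  have hwc₁ := (hw.dirDeriv (n := 1) c).differentiableAt one_ne_zero
  linear_combination h₃ - (lam + mu) * dirDeriv_add hα₁ hwc₁ c

end

theorem alpha_w_system_general
    (lam mu om : ℝ)
    (Ω : Set (ℝ × ℝ × ℝ)) (hΩ : IsOpen Ω)
    (u v w f₁ f₂ f₃ : ℝ × ℝ × ℝ → ℂ)
    (hu : ContDiffOn ℝ 3 u Ω) (hv : ContDiffOn ℝ 3 v Ω) (hw : ContDiffOn ℝ 3 w Ω)
    (helas1 : ∀ p ∈ Ω,
        (mu:ℂ) * (pdx3 (fun q => pdx3 u q) p + pdy3 (fun q => pdy3 u q) p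
            + pdz3 (fun q => pdz3 u q) p)
        + ((lam:ℂ)+(mu:ℂ)) * pdx3 (fun q => pdx3 u q + pdy3 v q + pdz3 w q) p
        + (om:ℂ)^2 * u p = -(f₁ p))
    (helas2 : ∀ p ∈ Ω,
        (mu:ℂ) * (pdx3 (fun q => pdx3 v q) p + pdy3 (fun q => pdy3 v q) p
            + pdz3 (fun q => pdz3 v q) p)
        + ((lam:ℂ)+(mu:ℂ)) * pdy3 (fun q => pdx3 u q + pdy3 v q + pdz3 w q) p
        + (om:ℂ)^2 * v p = -(f₂ p))
    (helas3 : ∀ p ∈ Ω,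
        (mu:ℂ) * (pdx3 (fun q => pdx3 w q) p + pdy3 (fun q => pdy3 w q) p
            + pdz3 (fun q => pdz3 w q) p)
        + ((lam:ℂ)+(mu:ℂ)) * pdz3 (fun q => pdx3 u q + pdy3 v q + pdz3 w q) p
        + (om:ℂ)^2 * w p = -(f₃ p))
    (α : ℝ × ℝ × ℝ → ℂ) (hα : α = fun q => pdx3 u q + pdy3 v q) :
    ∀ p ∈ Ω,
      (((lam:ℂ)+2*(mu:ℂ)) * lap2 α p + (mu:ℂ) * pdz3 (fun q => pdz3 α q) p
          + (om:ℂ)^2 * α p + ((lam:ℂ)+(mu:ℂ)) * lap2 (fun q => pdz3 w q) p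
        = -(pdx3 f₁ p + pdy3 f₂ p))
      ∧ (((lam:ℂ)+(mu:ℂ)) * pdz3 α p + ((lam:ℂ)+2*(mu:ℂ)) * pdz3 (fun q => pdz3 w q) p
          + (mu:ℂ) * lap2 w p + (om:ℂ)^2 * w p = -(f₃ p)) := by
  intro p hp
  have hΩp : Ω ∈ 𝓝 p := hΩ.mem_nhds hp
  have hu₃ := hu.contDiffAt hΩp
  have hv₃ := hv.contDiffAt hΩp
  have hw₃ := hw.contDiffAt hΩp
  exact ⟨planarDiv_equation_of_elasticity (1, 0, 0) (0, 1, 0) (0, 0, 1) hu₃ hv₃ hw₃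
      (eventually_of_mem hΩp helas1) (eventually_of_mem hΩp helas2) hα,
    vertical_equation_of_elasticity (1, 0, 0) (0, 1, 0) (0, 0, 1) (hu₃.of_le (by norm_num))
      (hv₃.of_le (by norm_num)) (hw₃.of_le (by norm_num)) (helas3 p hp) hα⟩

/-- **The coupled (α, w) system.** If `𝐮 = (u, v, w)` is a C³ solution of
`μΔ𝐮 + (λ+μ)∇(div 𝐮) + ω²𝐮 = −𝐟` in an open set `Ω ⊆ ℝ³`, then `α = div₂(u, v)` and `w`
satisfy the coupled system `(λ+2μ)Δ₂α + μ∂_zz α + ω²α + (λ+μ)Δ₂(∂_z w) = −div₂(f₁, f₂)`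
and `(λ+μ)∂_z α + (λ+2μ)∂_zz w + μΔ₂w + ω²w = −f₃` in `Ω`. -/
theorem alpha_w_system
    (lam mu om : ℝ) (hmu : 0 < mu) (hlm : 0 < lam + 2*mu)
    (Ω : Set (ℝ × ℝ × ℝ)) (hΩ : IsOpen Ω)
    (u v w f₁ f₂ f₃ : ℝ × ℝ × ℝ → ℂ)
    (hu : ContDiffOn ℝ 3 u Ω) (hv : ContDiffOn ℝ 3 v Ω) (hw : ContDiffOn ℝ 3 w Ω)
    (hf₁ : ContDiffOn ℝ 1 f₁ Ω) (hf₂ : ContDiffOn ℝ 1 f₂ Ω) (hf₃ : ContDiffOn ℝ 1 f₃ Ω)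
    (helas1 : ∀ p ∈ Ω,
        (mu:ℂ) * (pdx3 (fun q => pdx3 u q) p + pdy3 (fun q => pdy3 u q) p
            + pdz3 (fun q => pdz3 u q) p)
        + ((lam:ℂ)+(mu:ℂ)) * pdx3 (fun q => pdx3 u q + pdy3 v q + pdz3 w q) p
        + (om:ℂ)^2 * u p = -(f₁ p))
    (helas2 : ∀ p ∈ Ω,
        (mu:ℂ) * (pdx3 (fun q => pdx3 v q) p + pdy3 (fun q => pdy3 v q) p
            + pdz3 (fun q => pdz3 v q) p)
        + ((lam:ℂ)+(mu:ℂ)) * pdy3 (fun q => pdx3 u q + pdy3 v q + pdz3 w q) p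
        + (om:ℂ)^2 * v p = -(f₂ p))
    (helas3 : ∀ p ∈ Ω,
        (mu:ℂ) * (pdx3 (fun q => pdx3 w q) p + pdy3 (fun q => pdy3 w q) p
            + pdz3 (fun q => pdz3 w q) p)
        + ((lam:ℂ)+(mu:ℂ)) * pdz3 (fun q => pdx3 u q + pdy3 v q + pdz3 w q) p
        + (om:ℂ)^2 * w p = -(f₃ p))
    (α : ℝ × ℝ × ℝ → ℂ) (hα : α = fun q => pdx3 u q + pdy3 v q) :
    ∀ p ∈ Ω,
      (((lam:ℂ)+2*(mu:ℂ)) * lap2 α p + (mu:ℂ) * pdz3 (fun q => pdz3 α q) p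
          + (om:ℂ)^2 * α p + ((lam:ℂ)+(mu:ℂ)) * lap2 (fun q => pdz3 w q) p
        = -(pdx3 f₁ p + pdy3 f₂ p))
      ∧ (((lam:ℂ)+(mu:ℂ)) * pdz3 α p + ((lam:ℂ)+2*(mu:ℂ)) * pdz3 (fun q => pdz3 w q) p
          + (mu:ℂ) * lap2 w p + (om:ℂ)^2 * w p = -(f₃ p)) :=
  alpha_w_system_general lam mu om Ω hΩ u v w f₁ f₂ f₃ hu hv hw helas1 helas2 helas3 α hα
end

section
/- Let k ∈ ℂ with k ≠ 0 and Im(k) ≥ 0. Let a, b : ℝ → ℂ be differentiable functions satisfying a′(x) = ik b(x) and b′(x) = ik a(x) for all x ∈ ℝ, and assume the outgoing conditions: a′(x) − ik a(x) → 0 and b′(x) − ik b(x) → 0 as x → +∞, and −a′(x) − ik a(x) → 0 and −b′(x) − ik b(x) → 0 as x → −∞. Then a ≡ 0 and b ≡ 0 on ℝ. -/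
/-!
Writing `c = i k`, the combinations `a - b` and `a + b` solve `u' = -c u` and `u' = c u`, so
they are multiples of `exp (-c x)` and `exp (c x)`. Since `Im k ≥ 0`, these exponentials have
modulus at least `1` on `[0, ∞)` and on `(-∞, 0]` respectively, while the outgoing conditions
say that `-c (a - b) → 0` at `+∞` and `-c (a + b) → 0` at `-∞`. Hence both multiples vanish.
-/

open Complex Filter Topology

theorem eq_mul_exp_of_hasDerivAt {u : ℝ → ℂ} {c : ℂ} (hu : ∀ x, HasDerivAt u (c * u x) x)
    (x : ℝ) : u x = u 0 * exp (c * x) := by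
  have hexp (y : ℝ) : HasDerivAt (fun y : ℝ => exp (-c * y)) (exp (-c * y) * -c) y := by
    simpa using (((hasDerivAt_id y).ofReal_comp).const_mul (-c)).cexp
  have hprod (y : ℝ) : HasDerivAt (fun y => u y * exp (-c * y)) 0 y :=
    ((hu y).fun_mul (hexp y)).congr_deriv (by ring)
  have hconst : u x * exp (-c * x) = u 0 * exp (-c * (0 : ℝ)) :=
    is_const_of_deriv_eq_zero (fun y => (hprod y).differentiableAt) (fun y => (hprod y).deriv) x 0
  calc u x = u x * exp (-c * x) * exp (c * x) := by
        rw [mul_assoc, ← exp_add, neg_mul, neg_add_cancel, exp_zero, mul_one]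
    _ = u 0 * exp (c * x) := by rw [hconst, ofReal_zero, mul_zero, exp_zero, mul_one]

theorem eq_zero_of_hasDerivAt_of_tendsto {u : ℝ → ℂ} {c : ℂ} {l : Filter ℝ} [l.NeBot]
    (hu : ∀ x, HasDerivAt u (c * u x) x) (hl : ∀ᶠ x in l, 0 ≤ c.re * x)
    (hlim : Tendsto u l (𝓝 0)) (x : ℝ) : u x = 0 := by
  have hle : ∀ᶠ y in l, ‖u 0‖ ≤ ‖u y‖ := hl.mono fun y hy => by
    rw [eq_mul_exp_of_hasDerivAt hu y, norm_mul, norm_exp, re_mul_ofReal]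
    exact le_mul_of_one_le_right (norm_nonneg _) (Real.one_le_exp hy)
  have h0 : u 0 = 0 :=
    norm_le_zero_iff.mp (ge_of_tendsto (tendsto_zero_iff_norm_tendsto_zero.mp hlim) hle)
  rw [eq_mul_exp_of_hasDerivAt hu x, h0, zero_mul]

theorem outgoing_modal_uniqueness_general
    (k : ℂ) (hk : k ≠ 0) (him : 0 ≤ k.im)
    (a b : ℝ → ℂ) (hda : Differentiable ℝ a) (hdb : Differentiable ℝ b)
    (ha : ∀ x : ℝ, deriv a x = Complex.I * k * b x)
    (hb : ∀ x : ℝ, deriv b x = Complex.I * k * a x)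
    (hout1 : Tendsto (fun x : ℝ => deriv a x - Complex.I * k * a x) atTop (nhds 0))
    (hout3 : Tendsto (fun x : ℝ => -(deriv a x) - Complex.I * k * a x) atBot (nhds 0)) :
    ∀ x : ℝ, a x = 0 ∧ b x = 0 := by
  have hc : -(I * k) ≠ 0 := neg_ne_zero.mpr (mul_ne_zero I_ne_zero hk)
  have hA (x : ℝ) : HasDerivAt a (I * k * b x) x := ha x ▸ (hda x).hasDerivAt
  have hB (x : ℝ) : HasDerivAt b (I * k * a x) x := hb x ▸ (hdb x).hasDerivAt
  have hsub : ∀ x, a x - b x = 0 := by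
    refine eq_zero_of_hasDerivAt_of_tendsto (c := -(I * k))
      (fun x => ((hA x).fun_sub (hB x)).congr_deriv (by ring))
      ((eventually_ge_atTop 0).mono fun x hx => by simpa using mul_nonneg him hx) ?_
    refine (tendsto_const_smul_iff₀ hc).mp ?_
    rw [smul_zero]
    convert hout1 using 2 with x
    rw [ha, smul_eq_mul]
    ring
  have hadd : ∀ x, a x + b x = 0 := by
    refine eq_zero_of_hasDerivAt_of_tendsto (c := I * k)
      (fun x => ((hA x).fun_add (hB x)).congr_deriv (by ring))
      ((eventually_le_atBot 0).mono fun x hx => by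
        simpa using mul_nonneg_of_nonpos_of_nonpos (neg_nonpos.mpr him) hx) ?_
    refine (tendsto_const_smul_iff₀ hc).mp ?_
    rw [smul_zero]
    convert hout3 using 2 with x
    rw [ha, smul_eq_mul]
    ring
  intro x
  constructor
  · linear_combination (hsub x + hadd x) / 2
  · linear_combination (hadd x - hsub x) / 2

/-- **Uniqueness for outgoing modal coefficients.** If `k ≠ 0` with `Im k ≥ 0`, and
`a, b : ℝ → ℂ` are differentiable with `a′ = ikb`, `b′ = ika`, and satisfy the outgoing
conditions `a′ − ika → 0`, `b′ − ikb → 0` at `+∞` and `−a′ − ika → 0`, `−b′ − ikb → 0`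
at `−∞`, then `a ≡ 0` and `b ≡ 0`. -/
theorem outgoing_modal_uniqueness
    (k : ℂ) (hk : k ≠ 0) (him : 0 ≤ k.im)
    (a b : ℝ → ℂ) (hda : Differentiable ℝ a) (hdb : Differentiable ℝ b)
    (ha : ∀ x : ℝ, deriv a x = Complex.I * k * b x)
    (hb : ∀ x : ℝ, deriv b x = Complex.I * k * a x)
    (hout1 : Tendsto (fun x : ℝ => deriv a x - Complex.I * k * a x) atTop (nhds 0))
    (hout2 : Tendsto (fun x : ℝ => deriv b x - Complex.I * k * b x) atTop (nhds 0))
    (hout3 : Tendsto (fun x : ℝ => -(deriv a x) - Complex.I * k * a x) atBot (nhds 0))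
    (hout4 : Tendsto (fun x : ℝ => -(deriv b x) - Complex.I * k * b x) atBot (nhds 0)) :
    ∀ x : ℝ, a x = 0 ∧ b x = 0 :=
  outgoing_modal_uniqueness_general k hk him a b hda hdb ha hb hout1 hout3
end

section
/- Let k ∈ ℂ, and let F₁, F₂ : ℝ → ℂ be continuous functions with compact support. Define G₁(x) = e^{ik|x|}/2 and G₂(x) = (x/|x|)·e^{ik|x|}/2 (G₂(0) = 0), and set a = G₁∗F₁ − G₂∗F₂ and b = G₂∗F₁ − G₁∗F₂, where (g∗f)(x) = ∫_ℝ g(x−y) f(y) dy. Then a and b are differentiable on ℝ and satisfy a′(x) = ik b(x) − F₂(x) and b′(x) = ik a(x) + F₁(x) for all x ∈ ℝ. In particular, if F₁ and F₂ are C¹, then a and b solve the decoupled Helmholtz equations a″ + k²a = ikF₁ − F₂′ and b″ + k²b = F₁′ − ikF₂. -/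
/-!
Away from `t = 0` the Green functions combine into the one-sided kernels
`G₁ + G₂ = exp (i k t) 𝟙[t > 0]` and `G₁ - G₂ = exp (-i k t) 𝟙[t < 0]`, so convolving with them
gives integrals over half-lines, `R = (G₁ + G₂) ∗ F` and `L = (G₁ - G₂) ∗ F`. After factoring out
`exp (± i k x)`, the fundamental theorem of calculus gives `R' = i k R + F` and
`L' = -i k L - F`. The first-order system for `a, b` is then linear algebra, and differentiating
it once more decouples it into the two Helmholtz equations.
-/

open Complex MeasureTheory Set

section IntegralOverHalfLine

variable {E : Type*} [NormedAddCommGroup E] [NormedSpace ℝ E] [CompleteSpace E]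
  {h : ℝ → E} {x : ℝ}

theorem hasDerivAt_setIntegral_Iic (hi : Integrable h) (hc : ContinuousAt h x) :
    HasDerivAt (fun x => ∫ y in Iic x, h y) (h x) x := by
  have hsplit : (fun x => ∫ y in Iic x, h y)
      = fun x => (∫ y in Iic 0, h y) + ∫ y in (0 : ℝ)..x, h y := by
    ext x
    rw [← intervalIntegral.integral_Iic_sub_Iic hi.integrableOn hi.integrableOn, add_sub_cancel]
  rw [hsplit]
  exact (intervalIntegral.integral_hasDerivAt_right hi.intervalIntegrable
    hi.aestronglyMeasurable.stronglyMeasurableAtFilter hc).const_add _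

theorem hasDerivAt_setIntegral_Ici (hi : Integrable h) (hc : ContinuousAt h x) :
    HasDerivAt (fun x => ∫ y in Ici x, h y) (-h x) x := by
  have hsplit : (fun x => ∫ y in Ici x, h y) = fun x => (∫ y, h y) - ∫ y in Iic x, h y := by
    ext x
    rw [← intervalIntegral.integral_Iic_add_Ioi hi.integrableOn hi.integrableOn,
      integral_Ici_eq_integral_Ioi, add_sub_cancel_left]
  rw [hsplit]
  exact (hasDerivAt_setIntegral_Iic hi hc).const_sub _

end IntegralOverHalfLine

theorem hasDerivAt_cexp_mul_ofReal (c : ℂ) (x : ℝ) :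
    HasDerivAt (fun x : ℝ => exp (c * x)) (c * exp (c * x)) x := by
  simpa [mul_comm] using ((hasDerivAt_id (x : ℂ)).const_mul c).cexp.comp_ofReal

noncomputable def rightGoingWave (k : ℂ) (f : ℝ → ℂ) (x : ℝ) : ℂ :=
  ∫ y in Iic x, exp (I * k * (x - y)) * f y

noncomputable def leftGoingWave (k : ℂ) (f : ℝ → ℂ) (x : ℝ) : ℂ :=
  ∫ y in Ici x, exp (I * k * (y - x)) * f y

section Waves

variable {k : ℂ} {f : ℝ → ℂ}

theorem integrable_mul_of_continuous {g : ℝ → ℂ} (hg : Continuous g) (hf : Continuous f)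
    (hs : HasCompactSupport f) : Integrable fun y => g y * f y :=
  (hg.mul hf).integrable_of_hasCompactSupport hs.mul_left

theorem hasDerivAt_rightGoingWave (hf : Continuous f) (hs : HasCompactSupport f) (x : ℝ) :
    HasDerivAt (rightGoingWave k f) (I * k * rightGoingWave k f x + f x) x := by
  have hfactor : rightGoingWave k f
      = fun x : ℝ => exp (I * k * x) * ∫ y in Iic x, exp (-(I * k) * y) * f y := by
    ext x
    rw [rightGoingWave, ← integral_const_mul]
    congr 1 with y
    rw [mul_sub, sub_eq_add_neg, exp_add, neg_mul, mul_assoc]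
  rw [hfactor]
  have hint := hasDerivAt_setIntegral_Iic (integrable_mul_of_continuous (by fun_prop) hf hs)
    (by fun_prop : ContinuousAt (fun y : ℝ => exp (-(I * k) * y) * f y) x)
  refine ((hasDerivAt_cexp_mul_ofReal (I * k) x).mul hint).congr_deriv ?_
  have hinv : exp (I * k * x) * exp (-(I * k) * x) = 1 := by rw [← exp_add]; simp
  beta_reduce
  linear_combination f x * hinv

theorem hasDerivAt_leftGoingWave (hf : Continuous f) (hs : HasCompactSupport f) (x : ℝ) :
    HasDerivAt (leftGoingWave k f) (-(I * k) * leftGoingWave k f x - f x) x := by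
  have hfactor : leftGoingWave k f
      = fun x : ℝ => exp (-(I * k) * x) * ∫ y in Ici x, exp (I * k * y) * f y := by
    ext x
    rw [leftGoingWave, ← integral_const_mul]
    congr 1 with y
    rw [mul_sub, sub_eq_neg_add, exp_add, neg_mul, mul_assoc]
  rw [hfactor]
  have hint := hasDerivAt_setIntegral_Ici (integrable_mul_of_continuous (by fun_prop) hf hs)
    (by fun_prop : ContinuousAt (fun y : ℝ => exp (I * k * y) * f y) x)
  refine ((hasDerivAt_cexp_mul_ofReal (-(I * k)) x).mul hint).congr_deriv ?_
  have hinv : exp (-(I * k) * x) * exp (I * k * x) = 1 := by rw [← exp_add]; simp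
  beta_reduce
  linear_combination -f x * hinv

theorem integral_comp_sub_mul_eq_waves {G : ℝ → ℂ} (c : ℂ)
    (hpos : ∀ t > 0, G t = exp (I * k * t) / 2) (hneg : ∀ t < 0, G t = c * exp (-(I * k * t)) / 2)
    (hf : Continuous f) (hs : HasCompactSupport f) (x : ℝ) :
    ∫ y, G (x - y) * f y = (rightGoingWave k f x + c * leftGoingWave k f x) / 2 := by
  have hsplit : (fun y => G (x - y) * f y) =ᵐ[volume] fun y =>
      ((Iic x).indicator (fun y => exp (I * k * (x - y)) * f y) y
        + c * (Ici x).indicator (fun y => exp (I * k * (y - x)) * f y) y) / 2 := by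
    filter_upwards [volume.ae_ne x] with y hy
    rcases hy.lt_or_gt with hlt | hgt
    · rw [hpos _ (sub_pos.2 hlt), indicator_of_mem (mem_Iic.2 hlt.le),
        indicator_of_notMem (notMem_Ici.2 hlt)]
      push_cast
      ring
    · rw [hneg _ (sub_neg.2 hgt), indicator_of_notMem (notMem_Iic.2 hgt),
        indicator_of_mem (mem_Ici.2 hgt.le)]
      push_cast
      ring_nf
  rw [integral_congr_ae hsplit, integral_div, integral_add, integral_const_mul,
    integral_indicator measurableSet_Iic, integral_indicator measurableSet_Ici]
  · rfl
  · exact (integrable_mul_of_continuous (by fun_prop) hf hs).indicator measurableSet_Iic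
  · exact ((integrable_mul_of_continuous (by fun_prop) hf hs).indicator
      measurableSet_Ici).const_mul c

theorem integral_green₁_mul (hf : Continuous f) (hs : HasCompactSupport f) (x : ℝ) :
    ∫ y, (fun t : ℝ => exp (I * k * |t|) / 2) (x - y) * f y
      = (rightGoingWave k f x + leftGoingWave k f x) / 2 := by
  simpa using integral_comp_sub_mul_eq_waves (G := fun t : ℝ => exp (I * k * |t|) / 2) 1
    (fun t ht => by simp [abs_of_pos ht]) (fun t ht => by simp [abs_of_neg ht]) hf hs x

theorem integral_green₂_mul (hf : Continuous f) (hs : HasCompactSupport f) (x : ℝ) :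
    ∫ y, (fun t : ℝ => ((t / |t| : ℝ) : ℂ) * exp (I * k * |t|) / 2) (x - y) * f y
      = (rightGoingWave k f x - leftGoingWave k f x) / 2 := by
  simpa [sub_eq_add_neg] using integral_comp_sub_mul_eq_waves
    (G := fun t : ℝ => ((t / |t| : ℝ) : ℂ) * exp (I * k * |t|) / 2) (-1)
    (fun t ht => by simp [abs_of_pos ht, ht.ne']) (fun t ht => by simp [abs_of_neg ht, ht.ne])
    hf hs x

end Waves

theorem helmholtz_of_modal_system {k : ℂ} {a b F₁ F₂ : ℝ → ℂ}
    (hab : ∀ x, HasDerivAt a (I * k * b x - F₂ x) x ∧ HasDerivAt b (I * k * a x + F₁ x) x)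
    (hF₁ : Differentiable ℝ F₁) (hF₂ : Differentiable ℝ F₂) (x : ℝ) :
    deriv (deriv a) x + k ^ 2 * a x = I * k * F₁ x - deriv F₂ x
      ∧ deriv (deriv b) x + k ^ 2 * b x = deriv F₁ x - I * k * F₂ x := by
  have hda : deriv a = fun x => I * k * b x - F₂ x := funext fun x => (hab x).1.deriv
  have hdb : deriv b = fun x => I * k * a x + F₁ x := funext fun x => (hab x).2.deriv
  have hd2a : HasDerivAt (fun x => I * k * b x - F₂ x)
      (I * k * (I * k * a x + F₁ x) - deriv F₂ x) x :=
    ((hab x).2.const_mul (I * k)).sub (hF₂ x).hasDerivAt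
  have hd2b : HasDerivAt (fun x => I * k * a x + F₁ x)
      (I * k * (I * k * b x - F₂ x) + deriv F₁ x) x :=
    ((hab x).1.const_mul (I * k)).add (hF₁ x).hasDerivAt
  rw [hda, hdb, hd2a.deriv, hd2b.deriv]
  constructor
  · linear_combination k ^ 2 * a x * I_sq
  · linear_combination k ^ 2 * b x * I_sq

/-- **Convolution with the 1D outgoing Green functions solves the modal system.** For
continuous compactly supported `F₁, F₂` and `a = G₁∗F₁ − G₂∗F₂`, `b = G₂∗F₁ − G₁∗F₂`,
the functions `a, b` are differentiable with `a′ = ikb − F₂` and `b′ = ika + F₁`; in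
particular, if `F₁, F₂` are C¹ then `a″ + k²a = ikF₁ − F₂′` and `b″ + k²b = F₁′ − ikF₂`. -/
theorem green_convolution_modal_system
    (k : ℂ) (F₁ F₂ : ℝ → ℂ)
    (hF₁ : Continuous F₁) (hF₂ : Continuous F₂)
    (hs₁ : HasCompactSupport F₁) (hs₂ : HasCompactSupport F₂)
    (G₁ G₂ a b : ℝ → ℂ)
    (hG₁ : G₁ = fun x : ℝ => Complex.exp (Complex.I * k * |x|) / 2)
    (hG₂ : G₂ = fun x : ℝ => ((x / |x| : ℝ) : ℂ) * Complex.exp (Complex.I * k * |x|) / 2)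
    (ha : a = fun x : ℝ => (∫ y : ℝ, G₁ (x - y) * F₁ y) - ∫ y : ℝ, G₂ (x - y) * F₂ y)
    (hb : b = fun x : ℝ => (∫ y : ℝ, G₂ (x - y) * F₁ y) - ∫ y : ℝ, G₁ (x - y) * F₂ y) :
    (∀ x : ℝ, HasDerivAt a (Complex.I * k * b x - F₂ x) x
      ∧ HasDerivAt b (Complex.I * k * a x + F₁ x) x)
    ∧ (ContDiff ℝ 1 F₁ → ContDiff ℝ 1 F₂ → ∀ x : ℝ,
        deriv (deriv a) x + k^2 * a x = Complex.I * k * F₁ x - deriv F₂ x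
        ∧ deriv (deriv b) x + k^2 * b x = deriv F₁ x - Complex.I * k * F₂ x) := by
  subst hG₁ hG₂
  have ha' : a = fun x => (rightGoingWave k F₁ x + leftGoingWave k F₁ x) / 2
      - (rightGoingWave k F₂ x - leftGoingWave k F₂ x) / 2 := by
    simp only [ha, integral_green₁_mul hF₁ hs₁, integral_green₂_mul hF₂ hs₂]
  have hb' : b = fun x => (rightGoingWave k F₁ x - leftGoingWave k F₁ x) / 2
      - (rightGoingWave k F₂ x + leftGoingWave k F₂ x) / 2 := by
    simp only [hb, integral_green₂_mul hF₁ hs₁, integral_green₁_mul hF₂ hs₂]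
  have hder (x : ℝ) : HasDerivAt a (I * k * b x - F₂ x) x
      ∧ HasDerivAt b (I * k * a x + F₁ x) x := by
    have hR₁ := hasDerivAt_rightGoingWave (k := k) hF₁ hs₁ x
    have hR₂ := hasDerivAt_rightGoingWave (k := k) hF₂ hs₂ x
    have hL₁ := hasDerivAt_leftGoingWave (k := k) hF₁ hs₁ x
    have hL₂ := hasDerivAt_leftGoingWave (k := k) hF₂ hs₂ x
    rw [ha', hb']
    constructor
    · exact (((hR₁.add hL₁).div_const 2).sub ((hR₂.sub hL₂).div_const 2)).congr_deriv (by ring)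
    · exact (((hR₁.sub hL₁).div_const 2).sub ((hR₂.add hL₂).div_const 2)).congr_deriv (by ring)
  exact ⟨hder, fun h₁ h₂ => helmholtz_of_modal_system hder
    (h₁.differentiable one_ne_zero) (h₂.differentiable one_ne_zero)⟩
end

section
/- Let k ∈ ℂ, r > 0, and let F : ℝ → ℂ be continuous with support contained in [−r, r]. Define G₁(x) = e^{ik|x|}/2 and G₂(x) = (x/|x|)·e^{ik|x|}/2 (G₂(0) = 0), and set a = G₁∗F and b = G₂∗F. Then for every x > r, a and b are differentiable at x with a′(x) = ik a(x) and b′(x) = ik b(x); and for every x < −r, a′(x) = −ik a(x) and b′(x) = −ik b(x). Consequently a and b satisfy the outgoing condition: (x/|x|)a′(x) − ik a(x) = 0 and (x/|x|)b′(x) − ik b(x) = 0 for all |x| > r. -/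
/-!
Outside the support of `F`, the kernel `G(x - y)` has a fixed sign of `x - y`, so it is a single
exponential `e^{±ik(x - y)}` times a constant. The factor `e^{±ikx}` leaves the integral, and
the convolution is locally `e^{±ikx}` times a constant, which is the outgoing behaviour.
-/

open Complex MeasureTheory Filter Topology

lemma hasDerivAt_of_eventuallyEq_cexp_mul_const {f : ℝ → ℂ} {c C : ℂ} {x : ℝ}
    (hf : ∀ᶠ u in 𝓝 x, f u = cexp (c * u) * C) : HasDerivAt f (c * f x) x := by
  have hexp : HasDerivAt (fun u : ℝ => cexp (c * u) * C) (cexp (c * x) * (c * 1) * C) x :=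
    (((hasDerivAt_id x).ofReal_comp.const_mul c).cexp).mul_const C
  rw [hf.self_of_nhds, show c * (cexp (c * x) * C) = cexp (c * x) * (c * 1) * C by ring]
  exact hexp.congr_of_eventuallyEq hf

lemma integral_kernel_mul_eq_cexp_mul {G F : ℝ → ℂ} {c s : ℂ} {x : ℝ}
    (hG : ∀ y, F y ≠ 0 → G (x - y) = cexp (c * (x - y : ℝ)) * s) :
    ∫ y, G (x - y) * F y = cexp (c * x) * ∫ y : ℝ, cexp (-(c * y)) * s * F y := by
  rw [← integral_const_mul]
  refine integral_congr_ae (Eventually.of_forall fun y => ?_)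
  dsimp only
  by_cases hy : F y = 0
  · simp [hy]
  · rw [hG y hy, ofReal_sub, mul_sub, sub_eq_add_neg, Complex.exp_add]
    ring

lemma hasDerivAt_convolution_of_kernel_eq_cexp {G F : ℝ → ℂ} {c s : ℂ} {U : Set ℝ} {x : ℝ}
    (hU : U ∈ 𝓝 x) (hG : ∀ u ∈ U, ∀ y, F y ≠ 0 → G (u - y) = cexp (c * (u - y : ℝ)) * s) :
    HasDerivAt (fun u => ∫ y, G (u - y) * F y) (c * ∫ y, G (x - y) * F y) x :=
  hasDerivAt_of_eventuallyEq_cexp_mul_const <|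
    Filter.mem_of_superset hU fun u hu => integral_kernel_mul_eq_cexp_mul (hG u hu)

lemma hasDerivAt_convolution_right {G F : ℝ → ℂ} {c s : ℂ} {r x : ℝ}
    (hF : ∀ y, F y ≠ 0 → y ≤ r) (hG : ∀ z, 0 < z → G z = cexp (c * z) * s) (hx : r < x) :
    HasDerivAt (fun u => ∫ y, G (u - y) * F y) (c * ∫ y, G (x - y) * F y) x :=
  hasDerivAt_convolution_of_kernel_eq_cexp (Ioi_mem_nhds hx) fun _ hu y hy =>
    hG _ (sub_pos.2 ((hF y hy).trans_lt hu))

lemma hasDerivAt_convolution_left {G F : ℝ → ℂ} {c s : ℂ} {r x : ℝ}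
    (hF : ∀ y, F y ≠ 0 → r ≤ y) (hG : ∀ z, z < 0 → G z = cexp (c * z) * s) (hx : x < r) :
    HasDerivAt (fun u => ∫ y, G (u - y) * F y) (c * ∫ y, G (x - y) * F y) x :=
  hasDerivAt_convolution_of_kernel_eq_cexp (Iio_mem_nhds hx) fun _ hu y hy =>
    hG _ (sub_neg.2 ((Set.mem_Iio.1 hu).trans_le (hF y hy)))

lemma sign_mul_deriv_sub_eq_zero {f : ℝ → ℂ} {c : ℂ} {r x : ℝ} (hr : 0 ≤ r)
    (hright : ∀ x, r < x → HasDerivAt f (c * f x) x)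
    (hleft : ∀ x, x < -r → HasDerivAt f (-c * f x) x) (hx : r < |x|) :
    ((x / |x| : ℝ) : ℂ) * deriv f x - c * f x = 0 := by
  rcases lt_abs.1 hx with hx | hx
  · rw [abs_of_pos (hr.trans_lt hx), div_self (hr.trans_lt hx).ne', (hright x hx).deriv]
    simp
  · have hx' : x < 0 := by linarith
    rw [abs_of_neg hx', div_neg, div_self hx'.ne, (hleft x (by linarith)).deriv]
    push_cast
    ring

theorem green_convolution_outgoing_general
    (k : ℂ) (r : ℝ) (hr : 0 < r)
    (F : ℝ → ℂ)
    (hsupp : ∀ x : ℝ, x ∉ Set.Icc (-r) r → F x = 0)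
    (G₁ G₂ a b : ℝ → ℂ)
    (hG₁ : G₁ = fun x : ℝ => Complex.exp (Complex.I * k * |x|) / 2)
    (hG₂ : G₂ = fun x : ℝ => ((x / |x| : ℝ) : ℂ) * Complex.exp (Complex.I * k * |x|) / 2)
    (ha : a = fun x : ℝ => ∫ y : ℝ, G₁ (x - y) * F y)
    (hb : b = fun x : ℝ => ∫ y : ℝ, G₂ (x - y) * F y) :
    (∀ x : ℝ, r < x → HasDerivAt a (Complex.I * k * a x) x
        ∧ HasDerivAt b (Complex.I * k * b x) x)
    ∧ (∀ x : ℝ, x < -r → HasDerivAt a (-(Complex.I * k) * a x) x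
        ∧ HasDerivAt b (-(Complex.I * k) * b x) x)
    ∧ (∀ x : ℝ, r < |x| →
        ((x / |x| : ℝ) : ℂ) * deriv a x - Complex.I * k * a x = 0
        ∧ ((x / |x| : ℝ) : ℂ) * deriv b x - Complex.I * k * b x = 0) := by
  have hsupp_mem : ∀ y, F y ≠ 0 → y ∈ Set.Icc (-r) r := fun y => not_imp_comm.1 (hsupp y)
  have hG₁pos : ∀ z : ℝ, 0 < z → G₁ z = cexp (I * k * z) * (1 / 2) := fun z hz => by
    simp only [hG₁, abs_of_pos hz]; ring
  have hG₁neg : ∀ z : ℝ, z < 0 → G₁ z = cexp (-(I * k) * z) * (1 / 2) := fun z hz => by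
    simp only [hG₁, abs_of_neg hz, ofReal_neg, mul_neg, neg_mul]; ring
  have hG₂pos : ∀ z : ℝ, 0 < z → G₂ z = cexp (I * k * z) * (1 / 2) := fun z hz => by
    simp only [hG₂, abs_of_pos hz, div_self hz.ne', ofReal_one]; ring
  have hG₂neg : ∀ z : ℝ, z < 0 → G₂ z = cexp (-(I * k) * z) * (-1 / 2) := fun z hz => by
    simp only [hG₂, abs_of_neg hz, div_neg, div_self hz.ne, ofReal_neg, ofReal_one, mul_neg,
      neg_mul]
    ring
  subst ha hb
  have right (x : ℝ) (hx : r < x) := And.intro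
    (hasDerivAt_convolution_right (fun y hy => (hsupp_mem y hy).2) hG₁pos hx)
    (hasDerivAt_convolution_right (fun y hy => (hsupp_mem y hy).2) hG₂pos hx)
  have left (x : ℝ) (hx : x < -r) := And.intro
    (hasDerivAt_convolution_left (fun y hy => (hsupp_mem y hy).1) hG₁neg hx)
    (hasDerivAt_convolution_left (fun y hy => (hsupp_mem y hy).1) hG₂neg hx)
  exact ⟨right, left, fun x hx =>
    ⟨sign_mul_deriv_sub_eq_zero hr.le (fun x hx => (right x hx).1) (fun x hx => (left x hx).1) hx,
      sign_mul_deriv_sub_eq_zero hr.le (fun x hx => (right x hx).2) (fun x hx => (left x hx).2) hx⟩⟩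

/-- **Outgoing behavior of Green convolutions outside the source.** If `F` is continuous
with support in `[−r, r]`, then `a = G₁∗F` and `b = G₂∗F` satisfy `a′ = ika`, `b′ = ikb`
for `x > r` and `a′ = −ika`, `b′ = −ikb` for `x < −r`; consequently
`(x/|x|)a′(x) − ika(x) = 0` and `(x/|x|)b′(x) − ikb(x) = 0` for all `|x| > r`. -/
theorem green_convolution_outgoing
    (k : ℂ) (r : ℝ) (hr : 0 < r)
    (F : ℝ → ℂ) (hF : Continuous F)
    (hsupp : ∀ x : ℝ, x ∉ Set.Icc (-r) r → F x = 0)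
    (G₁ G₂ a b : ℝ → ℂ)
    (hG₁ : G₁ = fun x : ℝ => Complex.exp (Complex.I * k * |x|) / 2)
    (hG₂ : G₂ = fun x : ℝ => ((x / |x| : ℝ) : ℂ) * Complex.exp (Complex.I * k * |x|) / 2)
    (ha : a = fun x : ℝ => ∫ y : ℝ, G₁ (x - y) * F y)
    (hb : b = fun x : ℝ => ∫ y : ℝ, G₂ (x - y) * F y) :
    (∀ x : ℝ, r < x → HasDerivAt a (Complex.I * k * a x) x
        ∧ HasDerivAt b (Complex.I * k * b x) x)
    ∧ (∀ x : ℝ, x < -r → HasDerivAt a (-(Complex.I * k) * a x) x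
        ∧ HasDerivAt b (-(Complex.I * k) * b x) x)
    ∧ (∀ x : ℝ, r < |x| →
        ((x / |x| : ℝ) : ℂ) * deriv a x - Complex.I * k * a x = 0
        ∧ ((x / |x| : ℝ) : ℂ) * deriv b x - Complex.I * k * b x = 0) :=
  green_convolution_outgoing_general k r hr F hsupp G₁ G₂ a b hG₁ hG₂ ha hb
end
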